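/- arXiv:1504.05639 — 2 statements merged into one kernel-verified Lean document; each statement's English description precedes it below -/
import Mathlib

section
/- (Classical content of Theorem 5.) Let q = 2^t with t ≥ 4 and n = q+1, and let 3 ≤ i ≤ q/2 − 1. Then there exist convolutional codes V_2 ⊆ V_1 over F_q of length n, both with reduced basic (hence noncatastrophic) generator matrices of memory 1, such that dim V_1 = 2(i−1), dim V_2 = 2 (so dim V_1 − dim V_2 = 2i−4), the degrees of V_1 and V_2 are 4 and 2 (total 6), d_f(V_1) ≥ n−2i−1, and d_f(V_2^⊥) ≥ 3; these are the CSS ingredients of an asymmetric quantum convolutional code with parameters [(n, 2i−4, μ*; 6, d_z/d_x)]_q where d_z ≥ n−2i−1 and d_x ≥ 3. -/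
open Polynomial Matrix

namespace AQCC

variable {F : Type*} [Field F]

def ConvCode {ι : Type*} [Fintype ι] {n : ℕ} (G : Matrix ι (Fin n) F[X]) :
    Set (Fin n → F[X]) :=
  {x | ∃ u : ι → F[X], x = Matrix.vecMul u G}

def IsBasicGen {ι : Type*} [Fintype ι] [DecidableEq ι] {n : ℕ}
    (G : Matrix ι (Fin n) F[X]) : Prop :=
  ∃ B : Matrix (Fin n) ι F[X], G * B = 1

def rowDeg {ι : Type*} {n : ℕ} (G : Matrix ι (Fin n) F[X]) (i : ι) : ℕ :=
  Finset.univ.sup fun j => (G i j).natDegree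

def extDeg {ι : Type*} [Fintype ι] {n : ℕ} (G : Matrix ι (Fin n) F[X]) : ℕ :=
  ∑ i, rowDeg G i

def IsGenMat {ι : Type*} [Fintype ι] {n : ℕ} (G : Matrix ι (Fin n) F[X])
    (V : Set (Fin n → F[X])) : Prop :=
  LinearIndependent F[X] (fun i : ι => G i) ∧ ConvCode G = V

def genDegrees (n : ℕ) (V : Set (Fin n → F[X])) : Set ℕ :=
  {d | ∃ (k : ℕ) (G : Matrix (Fin k) (Fin n) F[X]),
    IsGenMat G V ∧ IsBasicGen G ∧ extDeg G = d}

def HasCodeDegree {n : ℕ} (V : Set (Fin n → F[X])) (γ : ℕ) : Prop :=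
  IsLeast (genDegrees n V) γ

def IsReducedBasic {ι : Type*} [Fintype ι] [DecidableEq ι] {n : ℕ}
    (G : Matrix ι (Fin n) F[X]) (V : Set (Fin n → F[X])) : Prop :=
  IsGenMat G V ∧ IsBasicGen G ∧ ∀ d ∈ genDegrees n V, extDeg G ≤ d

def HasDim {n : ℕ} (V : Set (Fin n → F[X])) (k : ℕ) : Prop :=
  ∃ G : Matrix (Fin k) (Fin n) F[X], IsGenMat G V

def HasMemory {n : ℕ} (V : Set (Fin n → F[X])) (μ : ℕ) : Prop :=
  ∃ (k : ℕ) (G : Matrix (Fin k) (Fin n) F[X]),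
    IsReducedBasic G V ∧ Finset.univ.sup (rowDeg G) = μ

noncomputable def polyWt {n : ℕ} (x : Fin n → F[X]) : ℕ :=
  ∑ j, (x j).support.card

noncomputable def freeDist {n : ℕ} (V : Set (Fin n → F[X])) : ℕ :=
  sInf {w | ∃ x ∈ V, x ≠ 0 ∧ polyWt x = w}

noncomputable def convPairing {n : ℕ} (u x : Fin n → F[X]) : F :=
  ∑ j, ∑ i ∈ (u j).support, (u j).coeff i * (x j).coeff i

def ConvDual {n : ℕ} (V : Set (Fin n → F[X])) : Set (Fin n → F[X]) :=
  {u | ∀ x ∈ V, convPairing u x = 0}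

def BlockCode {ι : Type*} {n : ℕ} (H : Matrix ι (Fin n) F) : Set (Fin n → F) :=
  {x | H.mulVec x = 0}

open Classical in
noncomputable def hWt {n : ℕ} (x : Fin n → F) : ℕ :=
  (Finset.univ.filter fun j => x j ≠ 0).card

noncomputable def minDist {n : ℕ} (C : Set (Fin n → F)) : ℕ :=
  sInf {w | ∃ x ∈ C, x ≠ 0 ∧ hWt x = w}

def BlockDual {n : ℕ} (C : Set (Fin n → F)) : Set (Fin n → F) :=
  {u | ∀ x ∈ C, ∑ j, u j * x j = 0}

def padRows {n : ℕ} (r : ℕ) {s : ℕ} (M : Matrix (Fin s) (Fin n) F) :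
    Matrix (Fin r) (Fin n) F :=
  fun p j => if h : (p : ℕ) < s then M ⟨p, h⟩ j else 0

/-! ### helpers -/

lemma vecMul_apply {k n : ℕ} (u : Fin k → F[X]) (G : Matrix (Fin k) (Fin n) F[X]) (j : Fin n) :
    Matrix.vecMul u G j = ∑ r, u r * G r j := by
  simp [Matrix.vecMul, dotProduct]

noncomputable def ofTuple {N : ℕ} (a : Fin N → F) : F[X] := ∑ t : Fin N, C (a t) * X ^ (t : ℕ)

lemma coeff_ofTuple {N : ℕ} (a : Fin N → F) (t : ℕ) :
    (ofTuple a).coeff t = if h : t < N then a ⟨t, h⟩ else 0 := by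
  rw [ofTuple, finset_sum_coeff]
  by_cases h : t < N
  · rw [dif_pos h]
    rw [Finset.sum_eq_single (⟨t, h⟩ : Fin N)]
    · simp
    · intro b _ hb
      simp only [coeff_C_mul, coeff_X_pow]
      rw [if_neg, mul_zero]
      exact fun he => hb (by ext; simp [he])
    · simp
  · rw [dif_neg h]
    apply Finset.sum_eq_zero
    intro b _
    simp only [coeff_C_mul, coeff_X_pow]
    rw [if_neg, mul_zero]
    intro he; exact h (he ▸ b.isLt)

lemma natDegree_ofTuple_le {N : ℕ} (a : Fin N → F) (d : ℕ) (hd : N ≤ d + 1) :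
    (ofTuple a).natDegree ≤ d := by
  rw [natDegree_le_iff_coeff_eq_zero]
  intro m hm
  rw [coeff_ofTuple, dif_neg]
  omega

lemma ofTuple_inj {N : ℕ} {a b : Fin N → F} (h : ofTuple a = ofTuple b) : a = b := by
  funext t
  have := congrArg (fun p => Polynomial.coeff p (t : ℕ)) h
  simpa [coeff_ofTuple, t.isLt] using this

/-- the polynomial matrix `G0 + D G1`. -/
noncomputable def mkG {k n : ℕ} (G0 G1 : Matrix (Fin k) (Fin n) F) :
    Matrix (Fin k) (Fin n) F[X] :=
  fun r j => C (G0 r j) + C (G1 r j) * X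

lemma mkG_natDegree_le {k n : ℕ} (G0 G1 : Matrix (Fin k) (Fin n) F) (r : Fin k) (j : Fin n) :
    (mkG G0 G1 r j).natDegree ≤ 1 := by
  apply le_trans (natDegree_add_le _ _)
  simp only [natDegree_C, max_le_iff]
  refine ⟨Nat.zero_le _, ?_⟩
  apply le_trans (natDegree_mul_le)
  simp

lemma mul_mkG_coeff_zero {k n : ℕ} (G0 G1 : Matrix (Fin k) (Fin n) F) (r : Fin k) (j : Fin n)
    (p : F[X]) : (p * mkG G0 G1 r j).coeff 0 = p.coeff 0 * G0 r j := by
  have : p * mkG G0 G1 r j = p * C (G0 r j) + (p * C (G1 r j)) * X := by rw [mkG]; ring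
  rw [this, coeff_add, coeff_mul_C, coeff_mul_X_zero, add_zero]

lemma mul_mkG_coeff_succ {k n : ℕ} (G0 G1 : Matrix (Fin k) (Fin n) F) (r : Fin k) (j : Fin n)
    (p : F[X]) (t : ℕ) :
    (p * mkG G0 G1 r j).coeff (t + 1) = p.coeff (t + 1) * G0 r j + p.coeff t * G1 r j := by
  have : p * mkG G0 G1 r j = p * C (G0 r j) + (p * C (G1 r j)) * X := by rw [mkG]; ring
  rw [this, coeff_add, coeff_mul_C, coeff_mul_X, coeff_mul_C]




section Master

variable {k n : ℕ} (G0 G1 : Matrix (Fin k) (Fin n) F) (φ : Fin k → Fin n)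

lemma vecMul_apply' {ι κ : Type*} [Fintype ι] (u : ι → F[X]) (G : Matrix ι κ F[X]) (j : κ) :
    Matrix.vecMul u G j = ∑ r, u r * G r j := by
  simp [Matrix.vecMul, dotProduct]

lemma vecMul_eq_sum_smul {ι κ : Type*} [Fintype ι] (u : ι → F[X]) (G : Matrix ι κ F[X]) :
    Matrix.vecMul u G = ∑ r, u r • (G r) := by
  funext j
  rw [vecMul_apply']
  simp [Finset.sum_apply]

/-- the constant column submatrix. -/
def subM : Matrix (Fin k) (Fin k) F := Matrix.of fun r r' => G0 r (φ r')

noncomputable def Mp : Matrix (Fin k) (Fin k) F[X] :=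
  (C : F →+* F[X]).mapMatrix (subM G0 φ)

noncomputable def Minv : Matrix (Fin k) (Fin k) F[X] :=
  (C : F →+* F[X]).mapMatrix (subM G0 φ)⁻¹

variable (hφ1 : ∀ r r', G1 r (φ r') = 0) (hdet : (subM G0 φ).det ≠ 0)

include hdet in
lemma Mp_mul_Minv : Mp G0 φ * Minv G0 φ = 1 := by
  rw [Mp, Minv, ← _root_.map_mul, Matrix.mul_nonsing_inv _ (isUnit_iff_ne_zero.2 hdet), _root_.map_one]

include hφ1 in
lemma master_col (u : Fin k → F[X]) (r' : Fin k) :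
    Matrix.vecMul u (mkG G0 G1) (φ r') = Matrix.vecMul u (Mp G0 φ) r' := by
  rw [vecMul_apply', vecMul_apply']
  apply Finset.sum_congr rfl
  intro r _
  congr 1
  simp [mkG, hφ1, Mp, subM]

include hφ1 hdet in
lemma master_recover_aux (u : Fin k → F[X]) :
    Matrix.vecMul (Matrix.vecMul (fun r' => Matrix.vecMul u (mkG G0 G1) (φ r')) (Minv G0 φ))
      (mkG G0 G1) = Matrix.vecMul u (mkG G0 G1) := by
  have h1 : (fun r' => Matrix.vecMul u (mkG G0 G1) (φ r')) = Matrix.vecMul u (Mp G0 φ) :=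
    funext (master_col G0 G1 φ hφ1 u)
  have h2 : Matrix.vecMul (Matrix.vecMul u (Mp G0 φ)) (Minv G0 φ) = u := by
    rw [Matrix.vecMul_vecMul, Mp_mul_Minv G0 φ hdet, Matrix.vecMul_one]
  rw [h1, h2]

include hφ1 hdet in
lemma master_vecMul_inj {u : Fin k → F[X]} (h : Matrix.vecMul u (mkG G0 G1) = 0) : u = 0 := by
  have h1 : Matrix.vecMul u (Mp G0 φ) = 0 := by
    funext r'
    rw [← master_col G0 G1 φ hφ1 u r', h]
    rfl
  have h2 : u = Matrix.vecMul (Matrix.vecMul u (Mp G0 φ)) (Minv G0 φ) := by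
    rw [Matrix.vecMul_vecMul, Mp_mul_Minv G0 φ hdet, Matrix.vecMul_one]
  rw [h2, h1, Matrix.zero_vecMul]

include hφ1 hdet in
lemma master_linIndep : LinearIndependent F[X] (fun r : Fin k => mkG G0 G1 r) := by
  rw [Fintype.linearIndependent_iff]
  intro g hg
  have : Matrix.vecMul g (mkG G0 G1) = 0 := by
    rw [vecMul_eq_sum_smul]; exact hg
  have := master_vecMul_inj G0 G1 φ hφ1 hdet this
  intro i; rw [this]; rfl

include hφ1 hdet in
lemma master_basic : IsBasicGen (mkG G0 G1) := by
  refine ⟨fun j r'' => ∑ r0, if j = φ r0 then Minv G0 φ r0 r'' else 0, ?_⟩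
  refine Matrix.ext fun r r'' => ?_
  change (∑ j, mkG G0 G1 r j * (∑ r0, if j = φ r0 then Minv G0 φ r0 r'' else 0)) = _
  have : ∀ j : Fin n, mkG G0 G1 r j * (∑ r0, if j = φ r0 then Minv G0 φ r0 r'' else 0)
      = ∑ r0, if j = φ r0 then mkG G0 G1 r j * Minv G0 φ r0 r'' else 0 := by
    intro j
    rw [Finset.mul_sum]
    exact Finset.sum_congr rfl fun r0 _ => by split <;> simp
  simp_rw [this]
  rw [Finset.sum_comm]
  have h2 : ∀ r0 : Fin k, (∑ j : Fin n, if j = φ r0 then mkG G0 G1 r j * Minv G0 φ r0 r'' else 0)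
      = Mp G0 φ r r0 * Minv G0 φ r0 r'' := by
    intro r0
    rw [Finset.sum_ite_eq' Finset.univ (φ r0) (fun j => mkG G0 G1 r j * Minv G0 φ r0 r'')]
    rw [if_pos (Finset.mem_univ _)]
    congr 1
    simp [mkG, hφ1, Mp, subM]
  simp_rw [h2]
  rw [← Matrix.mul_apply, Mp_mul_Minv G0 φ hdet]

variable (S : Finset (Fin k))
  (hS0 : ∀ r ∉ S, ∀ j, G1 r j = 0)
  (hSind : ∀ c : Fin k → F, ∑ r, c r • G1 r = 0 → ∀ r ∈ S, c r = 0)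

include hS0 hSind in
lemma master_rowDeg (r : Fin k) : rowDeg (mkG G0 G1) r = if r ∈ S then 1 else 0 := by
  rw [rowDeg]
  by_cases hr : r ∈ S
  · rw [if_pos hr]
    obtain ⟨j, hj⟩ : ∃ j, G1 r j ≠ 0 := by
      by_contra hall
      push_neg at hall
      have := hSind (fun r0 => if r0 = r then 1 else 0) ?_ r hr
      · simp at this
      · funext j
        simp only [Finset.sum_apply, Pi.smul_apply, smul_eq_mul, Pi.zero_apply]
        have : ∀ r0 : Fin k, (if r0 = r then (1:F) else 0) * G1 r0 j
            = if r0 = r then G1 r0 j else 0 := by intro r0; split <;> simp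
        simp_rw [this]
        rw [Finset.sum_ite_eq' Finset.univ r (fun r0 => G1 r0 j), if_pos (Finset.mem_univ _)]
        exact hall j
    apply le_antisymm
    · exact Finset.sup_le fun j _ => mkG_natDegree_le G0 G1 r j
    · have h1 : (mkG G0 G1 r j).coeff 1 ≠ 0 := by
        simp [mkG, coeff_C]
        exact hj
      have := le_natDegree_of_ne_zero h1
      exact le_trans this (Finset.le_sup (f := fun j => (mkG G0 G1 r j).natDegree) (Finset.mem_univ j))
  · rw [if_neg hr]
    rw [← Nat.le_zero]
    apply Finset.sup_le
    intro j _
    have : mkG G0 G1 r j = C (G0 r j) := by simp [mkG, hS0 r hr j]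
    rw [this, natDegree_C]

include hS0 hSind in
lemma master_extDeg : extDeg (mkG G0 G1) = S.card := by
  rw [extDeg]
  have : ∀ r : Fin k, rowDeg (mkG G0 G1) r = if r ∈ S then 1 else 0 :=
    master_rowDeg G0 G1 S hS0 hSind
  simp_rw [this]
  rw [Finset.sum_ite_mem, Finset.univ_inter, Finset.sum_const, smul_eq_mul, mul_one]

include hφ1 hdet hS0 hSind in
lemma master_lower [Fintype F] :
    ∀ d ∈ genDegrees n (ConvCode (mkG G0 G1)), S.card ≤ d := by
  classical
  intro d hd
  obtain ⟨k', G', ⟨hli', hcc'⟩, ⟨B', hB'⟩, rfl⟩ := hd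
  set G := mkG G0 G1 with hGdef
  set γ := S.card with hγdef
  set E := extDeg G' with hEdef
  set c := Finset.univ.sup (fun p : Fin n × Fin k' => (B' p.1 p.2).natDegree) with hcdef
  set m := k' * c + k' + γ + E + 1 with hmdef
  set N : Fin k → ℕ := fun r => if r ∈ S then m else m + 1 with hNdef
  set δ : Fin k' → ℕ := fun r' => rowDeg G' r' with hδdef
  have hm1 : 1 ≤ m := by omega
  -- injectivity of vecMul for G'
  have hinj' : ∀ w w' : Fin k' → F[X], Matrix.vecMul w G' = Matrix.vecMul w' G' → w = w' := by
    intro w w' h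
    have h0 : Matrix.vecMul (w - w') G' = 0 := by
      rw [Matrix.sub_vecMul, h, sub_self]
    rw [Fintype.linearIndependent_iff] at hli'
    have h1 := hli' (w - w') (by rw [← vecMul_eq_sum_smul]; exact h0)
    funext r'
    have := h1 r'
    simpa [sub_eq_zero] using this
  have hinjG : ∀ w w' : Fin k → F[X], Matrix.vecMul w G = Matrix.vecMul w' G → w = w' := by
    intro w w' h
    have h0 : Matrix.vecMul (w - w') G = 0 := by
      rw [Matrix.sub_vecMul, h, sub_self]
    have := master_vecMul_inj G0 G1 φ hφ1 hdet h0
    funext r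
    have h2 := congrFun this r
    simpa [sub_eq_zero] using h2
  have hBdeg : ∀ (j : Fin n) (r' : Fin k'), (B' j r').natDegree ≤ c :=
    fun j r' => Finset.le_sup (f := fun p : Fin n × Fin k' => (B' p.1 p.2).natDegree)
      (Finset.mem_univ (j, r'))
  have hGdeg' : ∀ (r' : Fin k') (j : Fin n), (G' r' j).natDegree ≤ δ r' :=
    fun r' j => Finset.le_sup (f := fun j => (G' r' j).natDegree) (Finset.mem_univ j)
  have hrecB : ∀ v ∈ ConvCode G, v = Matrix.vecMul (Matrix.vecMul v B') G' := by
    intro v hv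
    rw [← hcc'] at hv
    obtain ⟨x, rfl⟩ := hv
    have h1 : Matrix.vecMul (Matrix.vecMul x G') B' = x := by
      rw [Matrix.vecMul_vecMul, hB', Matrix.vecMul_one]
    rw [h1]
  have hq1 : 1 < Fintype.card F := Fintype.one_lt_card
  -- key recovery fact for G
  have hkey : ∀ v ∈ ConvCode G, (∀ j, (v j).natDegree ≤ m) →
      (∀ r, ((Matrix.vecMul (fun r'' => v (φ r'')) (Minv G0 φ)) r).natDegree ≤ m) ∧
      (∀ r ∈ S, ((Matrix.vecMul (fun r'' => v (φ r'')) (Minv G0 φ)) r).coeff m = 0) ∧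
      v = Matrix.vecMul (Matrix.vecMul (fun r'' => v (φ r'')) (Minv G0 φ)) G := by
    intro v hv hvdeg
    have hrec : v = Matrix.vecMul (Matrix.vecMul (fun r'' => v (φ r'')) (Minv G0 φ)) G := by
      obtain ⟨u0, rfl⟩ := hv
      exact (master_recover_aux G0 G1 φ hφ1 hdet u0).symm
    have hudeg : ∀ r, ((Matrix.vecMul (fun r'' => v (φ r'')) (Minv G0 φ)) r).natDegree ≤ m := by
      intro r
      rw [vecMul_apply']
      apply natDegree_sum_le_of_forall_le
      intro r'' _
      apply le_trans natDegree_mul_le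
      have h1 : (Minv G0 φ r'' r).natDegree = 0 := by
        have : Minv G0 φ r'' r = C ((subM G0 φ)⁻¹ r'' r) := rfl
        rw [this, natDegree_C]
      have h2 := hvdeg (φ r'')
      omega
    refine ⟨hudeg, ?_, hrec⟩
    intro r hr
    set u := Matrix.vecMul (fun r'' => v (φ r'')) (Minv G0 φ) with hudef
    have hcoeff : ∀ j, ∑ r0, (u r0).coeff m * G1 r0 j = 0 := by
      intro j
      have h1 : (v j).coeff (m + 1) = 0 :=
        coeff_eq_zero_of_natDegree_lt (lt_of_le_of_lt (hvdeg j) (Nat.lt_succ_self m))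
      have h2 : (v j).coeff (m + 1) = ∑ r0, ((u r0).coeff (m+1) * G0 r0 j + (u r0).coeff m * G1 r0 j) := by
        conv_lhs => rw [hrec]
        rw [vecMul_apply', finset_sum_coeff]
        apply Finset.sum_congr rfl
        intro r0 _
        exact mul_mkG_coeff_succ G0 G1 r0 j (u r0) m
      rw [Finset.sum_add_distrib] at h2
      have h3 : ∀ r0 : Fin k, (u r0).coeff (m+1) * G0 r0 j = 0 := by
        intro r0
        rw [coeff_eq_zero_of_natDegree_lt (lt_of_le_of_lt (hudeg r0) (Nat.lt_succ_self m)), zero_mul]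
      rw [Finset.sum_congr rfl (fun r0 _ => h3 r0), Finset.sum_const_zero, zero_add] at h2
      rw [← h2, h1]
    apply hSind (fun r0 => (u r0).coeff m) _ r hr
    funext j
    simp only [Finset.sum_apply, Pi.smul_apply, smul_eq_mul, Pi.zero_apply]
    exact hcoeff j
  -- ===== injection 1 =====
  have hvdeg1 : ∀ (u : ∀ r : Fin k, Fin (N r) → F) (j : Fin n),
      ((Matrix.vecMul (fun r => ofTuple (u r)) G) j).natDegree ≤ m := by
    intro u j
    rw [vecMul_apply']
    apply natDegree_sum_le_of_forall_le
    intro r _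
    by_cases hr : r ∈ S
    · apply le_trans natDegree_mul_le
      have h1 : (ofTuple (u r)).natDegree ≤ m - 1 :=
        natDegree_ofTuple_le _ _ (by simp only [hNdef, if_pos hr]; omega)
      have h2 : (G r j).natDegree ≤ 1 := mkG_natDegree_le G0 G1 r j
      omega
    · have hGc : G r j = C (G0 r j) := by simp [hGdef, mkG, hS0 r hr j]
      rw [hGc]
      apply le_trans natDegree_mul_le
      have h1 : (ofTuple (u r)).natDegree ≤ m :=
        natDegree_ofTuple_le _ _ (by simp only [hNdef, if_neg hr]; omega)
      rw [natDegree_C]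
      omega
  have hwdeg1 : ∀ (u : ∀ r : Fin k, Fin (N r) → F) (r' : Fin k'),
      ((Matrix.vecMul (Matrix.vecMul (fun r => ofTuple (u r)) G) B') r').natDegree ≤ m + c := by
    intro u r'
    rw [vecMul_apply' (Matrix.vecMul (fun r => ofTuple (u r)) G) B' r']
    apply natDegree_sum_le_of_forall_le
    intro j _
    apply le_trans natDegree_mul_le
    exact Nat.add_le_add (hvdeg1 u j) (hBdeg j r')
  have hinj1 : Function.Injective
      (fun (u : ∀ r : Fin k, Fin (N r) → F) =>
        (fun (r' : Fin k') (t : Fin (m + c + 1)) =>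
          ((Matrix.vecMul (Matrix.vecMul (fun r => ofTuple (u r)) G) B') r').coeff t)) := by
    intro u u' h
    simp only at h
    have hw : Matrix.vecMul (Matrix.vecMul (fun r => ofTuple (u r)) G) B'
        = Matrix.vecMul (Matrix.vecMul (fun r => ofTuple (u' r)) G) B' := by
      funext r'
      apply Polynomial.ext
      intro t
      by_cases ht : t < m + c + 1
      · exact congrFun (congrFun h r') ⟨t, ht⟩
      · rw [coeff_eq_zero_of_natDegree_lt (lt_of_le_of_lt (hwdeg1 u r') (by omega)),
          coeff_eq_zero_of_natDegree_lt (lt_of_le_of_lt (hwdeg1 u' r') (by omega))]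
    have hv : Matrix.vecMul (fun r => ofTuple (u r)) G
        = Matrix.vecMul (fun r => ofTuple (u' r)) G := by
      rw [hrecB _ ⟨fun r => ofTuple (u r), rfl⟩, hrecB _ ⟨fun r => ofTuple (u' r), rfl⟩, hw]
    have := hinjG _ _ hv
    funext r
    exact ofTuple_inj (congrFun this r)
  have hcard1 := Fintype.card_le_of_injective _ hinj1
  have hc1 : Fintype.card (∀ r : Fin k, Fin (N r) → F) = Fintype.card F ^ (∑ r, N r) := by
    rw [Fintype.card_pi]
    have : ∀ r : Fin k, Fintype.card (Fin (N r) → F) = Fintype.card F ^ (N r) := by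
      intro r
      rw [Fintype.card_fun, Fintype.card_fin]
    rw [Finset.prod_congr rfl (fun r _ => this r), Finset.prod_pow_eq_pow_sum]
  have hc2 : Fintype.card (Fin k' → Fin (m + c + 1) → F)
      = Fintype.card F ^ ((m + c + 1) * k') := by
    rw [Fintype.card_fun, Fintype.card_fun, Fintype.card_fin, Fintype.card_fin, ← pow_mul]
  rw [hc1, hc2, Nat.pow_le_pow_iff_right hq1] at hcard1
  -- hcard1 : ∑ r, N r ≤ (m + c + 1) * k'
  -- ===== injection 2 =====
  have hvdeg2 : ∀ (w : ∀ r' : Fin k', Fin (m + 1 - δ r') → F) (j : Fin n),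
      ((Matrix.vecMul (fun r' => ofTuple (w r')) G') j).natDegree ≤ m := by
    intro w j
    rw [vecMul_apply']
    apply natDegree_sum_le_of_forall_le
    intro r' _
    by_cases hd' : δ r' ≤ m
    · apply le_trans natDegree_mul_le
      have h1 : (ofTuple (w r')).natDegree ≤ m - δ r' :=
        natDegree_ofTuple_le _ _ (by omega)
      have h2 := hGdeg' r' j
      omega
    · have hzero : ofTuple (w r') = 0 := by
        have hie : IsEmpty (Fin (m + 1 - δ r')) := by
          have : m + 1 - δ r' = 0 := by omega
          rw [this]
          infer_instance
        rw [ofTuple, Finset.univ_eq_empty, Finset.sum_empty]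
      rw [hzero, zero_mul, natDegree_zero]
      omega
  have hmem2 : ∀ (w : ∀ r' : Fin k', Fin (m + 1 - δ r') → F),
      Matrix.vecMul (fun r' => ofTuple (w r')) G' ∈ ConvCode G := by
    intro w
    rw [← hcc']
    exact ⟨fun r' => ofTuple (w r'), rfl⟩
  have hinj2 : Function.Injective
      (fun (w : ∀ r' : Fin k', Fin (m + 1 - δ r') → F) =>
        (fun (r : Fin k) (t : Fin (N r)) =>
          ((Matrix.vecMul (fun r'' => (Matrix.vecMul (fun r' => ofTuple (w r')) G') (φ r''))
            (Minv G0 φ)) r).coeff t)) := by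
    intro w w' h
    simp only at h
    obtain ⟨hu1, hu2, hu3⟩ := hkey _ (hmem2 w) (hvdeg2 w)
    obtain ⟨hu1', hu2', hu3'⟩ := hkey _ (hmem2 w') (hvdeg2 w')
    have hu : (Matrix.vecMul (fun r'' => (Matrix.vecMul (fun r' => ofTuple (w r')) G') (φ r''))
        (Minv G0 φ)) = (Matrix.vecMul
          (fun r'' => (Matrix.vecMul (fun r' => ofTuple (w' r')) G') (φ r'')) (Minv G0 φ)) := by
      funext r
      apply Polynomial.ext
      intro t
      by_cases ht : t < N r
      · exact congrFun (congrFun h r) ⟨t, ht⟩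
      · push_neg at ht
        have hNr : N r = m ∨ N r = m + 1 := by
          by_cases hr : r ∈ S
          · left; simp only [hNdef, if_pos hr]
          · right; simp only [hNdef, if_neg hr]
        have hvan : ∀ (uu : Fin k → F[X]), (∀ r0, (uu r0).natDegree ≤ m) →
            (∀ r0 ∈ S, (uu r0).coeff m = 0) → (uu r).coeff t = 0 := by
          intro uu hd1 hd2
          rcases Nat.lt_or_ge m t with hmt | hmt
          · exact coeff_eq_zero_of_natDegree_lt (lt_of_le_of_lt (hd1 r) hmt)
          · have htm : t = m := by
              rcases hNr with h' | h' <;> omega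
            subst htm
            have hrS : r ∈ S := by
              by_contra hrS
              simp only [hNdef, if_neg hrS] at ht
              omega
            exact hd2 r hrS
        rw [hvan _ hu1 hu2, hvan _ hu1' hu2']
    have hv : Matrix.vecMul (fun r' => ofTuple (w r')) G'
        = Matrix.vecMul (fun r' => ofTuple (w' r')) G' := by
      rw [hu3, hu3', hu]
    have := hinj' _ _ hv
    funext r'
    exact ofTuple_inj (congrFun this r')
  have hcard2 := Fintype.card_le_of_injective _ hinj2
  have hc3 : Fintype.card (∀ r' : Fin k', Fin (m + 1 - δ r') → F)
      = Fintype.card F ^ (∑ r', (m + 1 - δ r')) := by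
    rw [Fintype.card_pi]
    have : ∀ r' : Fin k', Fintype.card (Fin (m + 1 - δ r') → F)
        = Fintype.card F ^ (m + 1 - δ r') := by
      intro r'
      rw [Fintype.card_fun, Fintype.card_fin]
    rw [Finset.prod_congr rfl (fun r' _ => this r'), Finset.prod_pow_eq_pow_sum]
  rw [hc3, hc1, Nat.pow_le_pow_iff_right hq1] at hcard2
  -- hcard2 : ∑ r', (m + 1 - δ r') ≤ ∑ r, N r
  -- ===== arithmetic =====
  set A := ∑ r, N r with hAdef
  set L := ∑ r' : Fin k', (m + 1 - δ r') with hLdef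
  have hγsum : γ = ∑ r : Fin k, (if r ∈ S then 1 else 0) := by
    rw [Finset.sum_ite_mem, Finset.univ_inter, Finset.sum_const, smul_eq_mul, mul_one]
  have hA : A + γ = k * (m + 1) := by
    rw [hAdef, hγsum, ← Finset.sum_add_distrib]
    have : ∀ r : Fin k, N r + (if r ∈ S then 1 else 0) = m + 1 := by
      intro r
      by_cases hr : r ∈ S <;> simp [hNdef, hr]
    rw [Finset.sum_congr rfl (fun r _ => this r), Finset.sum_const, Finset.card_univ,
      Fintype.card_fin, smul_eq_mul]
  have hE' : E = ∑ r' : Fin k', δ r' := by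
    rw [hEdef, extDeg]
  have h3 : k' * (m + 1) ≤ L + E := by
    rw [hLdef, hE', ← Finset.sum_add_distrib]
    have h4 : k' * (m+1) = ∑ _r' : Fin k', (m+1) := by
      rw [Finset.sum_const, Finset.card_univ, Fintype.card_fin, smul_eq_mul]
    rw [h4]
    apply Finset.sum_le_sum
    intro r' _
    omega
  have hγk : γ ≤ k := by
    rw [hγdef]
    calc S.card ≤ Finset.univ.card := Finset.card_le_univ S
    _ = k := by rw [Finset.card_univ, Fintype.card_fin]
  -- step 1: k ≤ k'
  have hkk' : k ≤ k' := by
    by_contra hcon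
    push_neg at hcon
    have hmul : k' * m + m ≤ k * m := by
      calc k' * m + m = (k' + 1) * m := by ring
      _ ≤ k * m := Nat.mul_le_mul_right _ (by omega)
    have hA' : A + γ = k * m + k := by rw [hA]; ring
    have h1' : A ≤ k' * m + (k' * c + k') := by
      calc A ≤ (m + c + 1) * k' := hcard1
      _ = k' * m + (k' * c + k') := by ring
    have hm' : m = k' * c + k' + γ + E + 1 := hmdef
    generalize k * m = P at hA' hmul
    generalize k' * m = Q at h1' hmul
    generalize k' * c = R at h1' hm'
    omega
  -- step 2: conclude
  have hmul2 : k * m ≤ k' * m := Nat.mul_le_mul_right _ hkk'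
  have h3' : k' * m + k' ≤ L + E := by
    calc k' * m + k' = k' * (m + 1) := by ring
    _ ≤ L + E := h3
  have hA' : A + γ = k * m + k := by rw [hA]; ring
  -- hcard2 : L ≤ A
  generalize k * m = P at hA' hmul2
  generalize k' * m = Q at h3' hmul2
  omega

end Master




lemma det_powMatrix_ne_zero {k : ℕ} (w : Fin k → F) (hw : Function.Injective w) :
    (Matrix.of fun r r' : Fin k => w r' ^ (r : ℕ)).det ≠ 0 := by
  have h : (Matrix.of fun r r' : Fin k => w r' ^ (r : ℕ)) = (Matrix.vandermonde w)ᵀ := by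
    ext r r'
    simp [Matrix.vandermonde, Matrix.transpose_apply]
  rw [h, Matrix.det_transpose, Matrix.det_vandermonde]
  apply Finset.prod_ne_zero_iff.2
  intro a _
  apply Finset.prod_ne_zero_iff.2
  intro b hb
  have hab : b ≠ a := (Finset.mem_Ioi.1 hb).ne'
  exact sub_ne_zero.2 fun h2 => hab (hw h2)

lemma sum_support_mul_ite (p : F[X]) (d : ℕ) (v : F) :
    ∑ i ∈ p.support, p.coeff i * (if i = d then v else 0) = p.coeff d * v := by
  have h : ∀ i ∈ p.support, p.coeff i * (if i = d then v else 0)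
      = if i = d then p.coeff i * v else 0 := by
    intro i _; split <;> simp
  rw [Finset.sum_congr rfl h, Finset.sum_ite_eq' p.support d (fun i => p.coeff i * v)]
  split
  · rfl
  · next hd => rw [Polynomial.notMem_support_iff.1 hd, zero_mul]

lemma convPairing_eq {n : ℕ} (u x : Fin n → F[X]) :
    convPairing u x = ∑ j, ∑ i ∈ (u j).support, (u j).coeff i * (x j).coeff i := rfl

lemma support_C_sum_eq (a : F) (p : F[X]) :
    ∑ i ∈ (C a).support, (C a).coeff i * p.coeff i = a * p.coeff 0 := by
  by_cases ha : a = 0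
  · subst ha
    simp
  · rw [Polynomial.support_C ha, Finset.sum_singleton, coeff_C_zero]

lemma mul_mkG_coeff_low {k n : ℕ} (G0 G1 : Matrix (Fin k) (Fin n) F) (r : Fin k) (j : Fin n)
    (p : F[X]) (d : ℕ) (hp : ∀ s < d, p.coeff s = 0) :
    (p * mkG G0 G1 r j).coeff d = p.coeff d * G0 r j := by
  cases d with
  | zero => exact mul_mkG_coeff_zero G0 G1 r j p
  | succ s => rw [mul_mkG_coeff_succ, hp s (Nat.lt_succ_self s), zero_mul, add_zero]

lemma eval_ofTuple {N : ℕ} (a : Fin N → F) (z : F) :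
    (ofTuple a).eval z = ∑ t : Fin N, a t * z ^ (t : ℕ) := by
  rw [ofTuple, eval_finset_sum]
  exact Finset.sum_congr rfl fun t _ => by simp

set_option maxHeartbeats 1000000 in
/-- classical content of Theorem 5. -/
theorem stmt7 {F : Type*} [Field F] [Fintype F]
    {q t n : ℕ} (ht : 4 ≤ t) (hq : q = 2 ^ t) (hF : Fintype.card F = q)
    (hn : n = q + 1) (i : ℕ) (hi1 : 3 ≤ i) (hi2 : i ≤ q / 2 - 1) :
    ∃ (V1 V2 : Set (Fin n → F[X])) (k1 k2 : ℕ)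
      (G1 : Matrix (Fin k1) (Fin n) F[X]) (G2 : Matrix (Fin k2) (Fin n) F[X]),
      V2 ⊆ V1 ∧
      IsReducedBasic G1 V1 ∧ Finset.univ.sup (rowDeg G1) = 1 ∧
      IsReducedBasic G2 V2 ∧ Finset.univ.sup (rowDeg G2) = 1 ∧
      k1 = 2 * (i - 1) ∧ k2 = 2 ∧
      HasCodeDegree V1 4 ∧ HasCodeDegree V2 2 ∧
      n - 2 * i - 1 ≤ freeDist V1 ∧
      3 ≤ freeDist (ConvDual V2) := by
  classical
  have hq16 : 16 ≤ q := by
    subst hq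
    calc (16:ℕ) = 2 ^ 4 := by norm_num
    _ ≤ 2 ^ t := Nat.pow_le_pow_right (by norm_num) ht
  have hq2 : q / 2 * 2 = q := Nat.div_mul_cancel (by subst hq; exact dvd_pow_self 2 (by omega))
  have h2i : 2 * i + 2 ≤ q := by omega
  set k := 2 * (i - 1) with hk
  have hk4 : 4 ≤ k := by omega
  have hkq : k + 4 ≤ q := by omega
  have hkn : k ≤ n := by omega
  have hk2 : 2 ≤ k := by omega
  have h2n : 2 ≤ n := by omega
  set α : Fin q → F := fun j => (Fintype.equivFinOfCardEq hF).symm j with hα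
  have hαinj : Function.Injective α := (Fintype.equivFinOfCardEq hF).symm.injective
  set A0 : Matrix (Fin k) (Fin n) F := fun r j =>
    if h : (j : ℕ) < q then (α ⟨(j : ℕ), h⟩) ^ (r : ℕ) else (if (r : ℕ) = 1 then 1 else 0)
    with hA0
  set A1 : Matrix (Fin k) (Fin n) F := fun r j =>
    if ((r : ℕ) < 4 ∧ (j : ℕ) = k + (r : ℕ)) then 1 else 0 with hA1
  set A0' : Matrix (Fin 2) (Fin n) F :=
    fun g j => A0 ⟨(g : ℕ), lt_of_lt_of_le g.isLt hk2⟩ j with hA0'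
  set A1' : Matrix (Fin 2) (Fin n) F :=
    fun g j => A1 ⟨(g : ℕ), lt_of_lt_of_le g.isLt hk2⟩ j with hA1'
  set φb : Fin k → Fin n := fun r => ⟨(r : ℕ), lt_of_lt_of_le r.isLt hkn⟩ with hφb
  set φ2 : Fin 2 → Fin n := fun g => ⟨(g : ℕ), lt_of_lt_of_le g.isLt h2n⟩ with hφ2
  have hφ1b : ∀ r r' : Fin k, A1 r (φb r') = 0 := by
    intro r r'
    have h3 := r'.isLt
    simp only [hA1, hφb]
    rw [if_neg]
    rintro ⟨-, h2⟩
    omega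
  have hkltq : k ≤ q := by omega
  have hdetb : (subM A0 φb).det ≠ 0 := by
    have heq : subM A0 φb = Matrix.of (fun r r' : Fin k =>
        (fun r'' : Fin k => α ⟨(r'' : ℕ), lt_of_lt_of_le r''.isLt hkltq⟩) r' ^ (r : ℕ)) := by
      ext r r'
      have hlt : ((φb r' : Fin n) : ℕ) < q := lt_of_lt_of_le r'.isLt hkltq
      simp only [subM, Matrix.of_apply, hA0]
      rw [dif_pos hlt]
    rw [heq]
    apply det_powMatrix_ne_zero
    intro a b hab
    have h5 : ((⟨(a : ℕ), _⟩ : Fin q) : ℕ) = ((⟨(b : ℕ), _⟩ : Fin q) : ℕ) :=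
      congrArg Fin.val (hαinj hab)
    exact Fin.ext h5
  set Sb : Finset (Fin k) := Finset.univ.filter (fun r => (r : ℕ) < 4) with hSbdef
  have hSbcard : Sb.card = 4 := by
    have him : Sb = Finset.image
        (fun x : Fin 4 => (⟨(x : ℕ), lt_of_lt_of_le x.isLt hk4⟩ : Fin k)) Finset.univ := by
      ext r
      simp only [hSbdef, Finset.mem_filter, Finset.mem_image, Finset.mem_univ, true_and]
      constructor
      · intro hr
        exact ⟨⟨(r : ℕ), hr⟩, Fin.ext rfl⟩
      · rintro ⟨x, rfl⟩
        exact x.isLt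
    have hinj4 : Function.Injective
        (fun x : Fin 4 => (⟨(x : ℕ), lt_of_lt_of_le x.isLt hk4⟩ : Fin k)) :=
      fun a b hab => by
        have h6 := congrArg Fin.val hab
        exact Fin.ext h6
    rw [him, Finset.card_image_of_injective _ hinj4, Finset.card_univ, Fintype.card_fin]
  have hS0b : ∀ r ∉ Sb, ∀ j, A1 r j = 0 := by
    intro r hr j
    have h4 : ¬ (r : ℕ) < 4 := fun h => hr (Finset.mem_filter.2 ⟨Finset.mem_univ r, h⟩)
    simp only [hA1]
    rw [if_neg]
    rintro ⟨h1, -⟩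
    exact h4 h1
  have hSindb : ∀ c : Fin k → F, ∑ r, c r • A1 r = 0 → ∀ r ∈ Sb, c r = 0 := by
    intro c hc r hr
    have hr4 : (r : ℕ) < 4 := (Finset.mem_filter.1 hr).2
    have hjlt : k + (r : ℕ) < n := by omega
    have h0 := congrFun hc (⟨k + (r : ℕ), hjlt⟩ : Fin n)
    simp only [Finset.sum_apply, Pi.smul_apply, smul_eq_mul, Pi.zero_apply] at h0
    have hterm : ∀ r0 : Fin k, c r0 * A1 r0 (⟨k + (r : ℕ), hjlt⟩ : Fin n)
        = if r0 = r then c r0 else 0 := by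
      intro r0
      simp only [hA1]
      by_cases h : r0 = r
      · subst h
        rw [if_pos ⟨hr4, rfl⟩, mul_one, if_pos rfl]
      · rw [if_neg, mul_zero, if_neg h]
        rintro ⟨-, h2⟩
        exact h (Fin.ext (by omega))
    rw [Finset.sum_congr rfl (fun r0 _ => hterm r0),
      Finset.sum_ite_eq' Finset.univ r c, if_pos (Finset.mem_univ r)] at h0
    exact h0
  have hφ12 : ∀ g g' : Fin 2, A1' g (φ2 g') = 0 := by
    intro g g'
    have h3 := g'.isLt
    simp only [hA1', hA1, hφ2]
    rw [if_neg]
    rintro ⟨-, h2⟩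
    omega
  have h2q : 2 ≤ q := by omega
  have hdet2 : (subM A0' φ2).det ≠ 0 := by
    have heq : subM A0' φ2 = Matrix.of (fun g g' : Fin 2 =>
        (fun g'' : Fin 2 => α ⟨(g'' : ℕ), lt_of_lt_of_le g''.isLt h2q⟩) g' ^ (g : ℕ)) := by
      ext g g'
      have hlt : ((φ2 g' : Fin n) : ℕ) < q := lt_of_lt_of_le g'.isLt h2q
      simp only [subM, Matrix.of_apply, hA0', hA0]
      rw [dif_pos hlt]
    rw [heq]
    apply det_powMatrix_ne_zero
    intro a b hab
    have h5 : ((⟨(a : ℕ), _⟩ : Fin q) : ℕ) = ((⟨(b : ℕ), _⟩ : Fin q) : ℕ) :=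
      congrArg Fin.val (hαinj hab)
    exact Fin.ext h5
  have hS02 : ∀ g ∉ (Finset.univ : Finset (Fin 2)), ∀ j, A1' g j = 0 := by
    intro g hg; exact absurd (Finset.mem_univ g) hg
  have hSind2 : ∀ c : Fin 2 → F, ∑ g, c g • A1' g = 0 →
      ∀ g ∈ (Finset.univ : Finset (Fin 2)), c g = 0 := by
    intro c hc g _
    have hglt : (g : ℕ) < 2 := g.isLt
    have hjlt : k + (g : ℕ) < n := by omega
    have h0 := congrFun hc (⟨k + (g : ℕ), hjlt⟩ : Fin n)
    simp only [Finset.sum_apply, Pi.smul_apply, smul_eq_mul, Pi.zero_apply] at h0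
    have hterm : ∀ g0 : Fin 2, c g0 * A1' g0 (⟨k + (g : ℕ), hjlt⟩ : Fin n)
        = if g0 = g then c g0 else 0 := by
      intro g0
      simp only [hA1', hA1]
      by_cases h : g0 = g
      · subst h
        rw [if_pos ⟨by omega, rfl⟩, mul_one, if_pos rfl]
      · rw [if_neg, mul_zero, if_neg h]
        rintro ⟨-, h2⟩
        exact h (Fin.ext (by omega))
    rw [Finset.sum_congr rfl (fun g0 _ => hterm g0),
      Finset.sum_ite_eq' Finset.univ g c, if_pos (Finset.mem_univ g)] at h0
    exact h0
  -- master consequences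
  have hlinb := master_linIndep A0 A1 φb hφ1b hdetb
  have hbasb := master_basic A0 A1 φb hφ1b hdetb
  have hrowb := master_rowDeg A0 A1 Sb hS0b hSindb
  have hextb : extDeg (mkG A0 A1) = 4 := by
    rw [master_extDeg A0 A1 Sb hS0b hSindb, hSbcard]
  have hlowb := master_lower A0 A1 φb hφ1b hdetb Sb hS0b hSindb
  have hlin2 := master_linIndep A0' A1' φ2 hφ12 hdet2
  have hbas2 := master_basic A0' A1' φ2 hφ12 hdet2
  have hrow2 := master_rowDeg A0' A1' Finset.univ hS02 hSind2
  have hext2 : extDeg (mkG A0' A1') = 2 := by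
    rw [master_extDeg A0' A1' Finset.univ hS02 hSind2]
    simp
  have hlow2' := master_lower A0' A1' φ2 hφ12 hdet2 Finset.univ hS02 hSind2
  have hlow2 : ∀ d ∈ genDegrees n (ConvCode (mkG A0' A1')), 2 ≤ d := by
    intro d hd
    have h9 := hlow2' d hd
    simpa using h9
  have hsupb : Finset.univ.sup (rowDeg (mkG A0 A1)) = 1 := by
    apply le_antisymm
    · apply Finset.sup_le
      intro r _
      rw [hrowb r]
      split <;> omega
    · have hr0 : (⟨0, by omega⟩ : Fin k) ∈ Sb :=
        Finset.mem_filter.2 ⟨Finset.mem_univ _, show (0:ℕ) < 4 by norm_num⟩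
      have h1 := hrowb ⟨0, by omega⟩
      rw [if_pos hr0] at h1
      calc (1:ℕ) = rowDeg (mkG A0 A1) ⟨0, by omega⟩ := h1.symm
      _ ≤ _ := Finset.le_sup (Finset.mem_univ _)
  have hsup2 : Finset.univ.sup (rowDeg (mkG A0' A1')) = 1 := by
    apply le_antisymm
    · apply Finset.sup_le
      intro g _
      rw [hrow2 g, if_pos (Finset.mem_univ g)]
    · have h1 := hrow2 0
      rw [if_pos (Finset.mem_univ _)] at h1
      calc (1:ℕ) = rowDeg (mkG A0' A1') 0 := h1.symm
      _ ≤ _ := Finset.le_sup (Finset.mem_univ _)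
  have hsub : ConvCode (mkG A0' A1') ⊆ ConvCode (mkG A0 A1) := by
    rintro x ⟨u, rfl⟩
    refine ⟨fun r => ∑ g : Fin 2, if (r : ℕ) = (g : ℕ) then u g else 0, ?_⟩
    funext j
    rw [vecMul_apply', vecMul_apply']
    have hterm : ∀ r : Fin k, (∑ g : Fin 2, if (r : ℕ) = (g : ℕ) then u g else 0) * mkG A0 A1 r j
        = ∑ g : Fin 2, if (r : ℕ) = (g : ℕ) then u g * mkG A0 A1 r j else 0 := by
      intro r
      rw [Finset.sum_mul]
      exact Finset.sum_congr rfl fun g _ => by split <;> simp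
    have hrhs : ∑ r : Fin k, (∑ g : Fin 2, if (r : ℕ) = (g : ℕ) then u g else 0) * mkG A0 A1 r j
        = ∑ g : Fin 2, u g * mkG A0 A1 ⟨(g : ℕ), lt_of_lt_of_le g.isLt hk2⟩ j := by
      rw [Finset.sum_congr rfl (fun r _ => hterm r), Finset.sum_comm]
      apply Finset.sum_congr rfl
      intro g _
      have h0 : ∀ r ∈ (Finset.univ : Finset (Fin k)),
          r ≠ (⟨(g : ℕ), lt_of_lt_of_le g.isLt hk2⟩ : Fin k) →
          (if (r : ℕ) = (g : ℕ) then u g * mkG A0 A1 r j else 0) = 0 := by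
        intro r _ hr
        rw [if_neg]
        intro h
        exact hr (Fin.ext h)
      have h1 : ((⟨(g : ℕ), lt_of_lt_of_le g.isLt hk2⟩ : Fin k) ∉ (Finset.univ : Finset (Fin k))) →
          (if ((⟨(g : ℕ), lt_of_lt_of_le g.isLt hk2⟩ : Fin k) : ℕ) = (g : ℕ)
            then u g * mkG A0 A1 ⟨(g : ℕ), lt_of_lt_of_le g.isLt hk2⟩ j else 0) = 0 :=
        fun h => absurd (Finset.mem_univ _) h
      rw [Finset.sum_eq_single _ h0 h1, if_pos rfl]
    rw [hrhs]
    apply Finset.sum_congr rfl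
    intro g _
    rfl
  have hfree1 : n - 2 * i - 1 ≤ freeDist (ConvCode (mkG A0 A1)) := by
    have hkpos : 0 < k := by omega
    set r0 : Fin k := ⟨0, hkpos⟩ with hr0def
    set x0 : Fin n → F[X] := Matrix.vecMul (fun r => if r = r0 then 1 else 0) (mkG A0 A1)
      with hx0
    have hx0mem : x0 ∈ ConvCode (mkG A0 A1) := ⟨_, rfl⟩
    have hx0val : x0 (φb r0) = 1 := by
      rw [hx0, vecMul_apply']
      have hterm : ∀ r : Fin k, (if r = r0 then (1:F[X]) else 0) * mkG A0 A1 r (φb r0)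
          = if r = r0 then mkG A0 A1 r (φb r0) else 0 := fun r => by split <;> simp
      rw [Finset.sum_congr rfl fun r _ => hterm r,
        Finset.sum_ite_eq' Finset.univ r0 (fun r => mkG A0 A1 r (φb r0)),
        if_pos (Finset.mem_univ _)]
      have hA1z : A1 r0 (φb r0) = 0 := hφ1b r0 r0
      have hA0o : A0 r0 (φb r0) = 1 := by
        have hlt : ((φb r0 : Fin n) : ℕ) < q := lt_of_lt_of_le r0.isLt hkltq
        simp only [hA0]
        rw [dif_pos hlt]
        exact pow_zero _
      have hmk : mkG A0 A1 r0 (φb r0) = C (A0 r0 (φb r0)) + C (A1 r0 (φb r0)) * X := rfl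
      rw [hmk, hA0o, hA1z]
      simp
    have hx0ne : x0 ≠ 0 := by
      intro h
      rw [h] at hx0val
      exact zero_ne_one hx0val
    have hbound : ∀ x ∈ ConvCode (mkG A0 A1), x ≠ 0 → n - 2 * i - 1 ≤ polyWt x := by
      rintro x ⟨u, rfl⟩ hxne
      have hune : u ≠ 0 := by
        rintro rfl
        exact hxne (Matrix.zero_vecMul _)
      have hTne : (Finset.univ.biUnion (fun r : Fin k => (u r).support)).Nonempty := by
        obtain ⟨r, hr⟩ := Function.ne_iff.1 hune
        obtain ⟨s, hs⟩ := Polynomial.support_nonempty.2 hr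
        exact ⟨s, Finset.mem_biUnion.2 ⟨r, Finset.mem_univ _, hs⟩⟩
      set m0 := (Finset.univ.biUnion (fun r : Fin k => (u r).support)).min' hTne with hm0
      have hlow : ∀ r : Fin k, ∀ s, s < m0 → (u r).coeff s = 0 := by
        intro r s hs
        by_contra hns
        have hmem : s ∈ Finset.univ.biUnion (fun r : Fin k => (u r).support) :=
          Finset.mem_biUnion.2 ⟨r, Finset.mem_univ _, Polynomial.mem_support_iff.2 hns⟩
        exact absurd (Finset.min'_le _ _ hmem) (by omega)
      obtain ⟨r1, -, hr1⟩ := Finset.mem_biUnion.1 (Finset.min'_mem _ hTne)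
      have hc1 : (u r1).coeff m0 ≠ 0 := Polynomial.mem_support_iff.1 hr1
      set cv : Fin k → F := fun r => (u r).coeff m0 with hcv
      set f : F[X] := ofTuple cv with hf
      have hfne : f ≠ 0 := by
        intro h
        have h7 := coeff_ofTuple cv (r1 : ℕ)
        rw [← hf, h, coeff_zero, dif_pos r1.isLt] at h7
        exact hc1 h7.symm
      have hfdeg : f.natDegree ≤ k - 1 := natDegree_ofTuple_le _ _ (by omega)
      have hslice : ∀ j : Fin n,
          (Matrix.vecMul u (mkG A0 A1) j).coeff m0 = ∑ r, cv r * A0 r j := by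
        intro j
        rw [vecMul_apply', finset_sum_coeff]
        apply Finset.sum_congr rfl
        intro r _
        rw [mul_mkG_coeff_low A0 A1 r j (u r) m0 (fun s hs => hlow r s hs)]
      set Rts := Finset.univ.filter (fun j : Fin q => f.eval (α j) = 0) with hRts
      have hRcard : Rts.card ≤ k - 1 := by
        have h8 : Rts.card ≤ f.roots.toFinset.card := by
          apply Finset.card_le_card_of_injOn (fun j => α j)
          · intro j hj
            rw [Finset.mem_coe, Multiset.mem_toFinset, Polynomial.mem_roots hfne]
            exact (Finset.mem_filter.1 hj).2
          · exact fun a _ b _ h => hαinj h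
        calc Rts.card ≤ f.roots.toFinset.card := h8
        _ ≤ Multiset.card f.roots := Multiset.toFinset_card_le _
        _ ≤ f.natDegree := Polynomial.card_roots' f
        _ ≤ k - 1 := hfdeg
      set NR := Finset.univ.filter (fun j : Fin q => ¬ f.eval (α j) = 0) with hNR
      have hNRcard : q - (k - 1) ≤ NR.card := by
        have h9 := Finset.card_filter_add_card_filter_not
          (s := (Finset.univ : Finset (Fin q))) (fun j => f.eval (α j) = 0)
        rw [Finset.card_univ, Fintype.card_fin] at h9
        have hNReq : NR = Finset.univ \ Rts := by
          rw [hNR, hRts, Finset.filter_not]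
        have h9' : NR.card = q - Rts.card := by
          rw [hNReq, Finset.card_sdiff_of_subset (Finset.subset_univ Rts), Finset.card_univ,
            Fintype.card_fin]
        omega
      have hwt : NR.card ≤ polyWt (Matrix.vecMul u (mkG A0 A1)) := by
        set emb : Fin q → Fin n := fun j => ⟨(j : ℕ), by omega⟩ with hembd
        have hembinj : Function.Injective emb := by
          intro a b hab
          have h10 := congrArg Fin.val hab
          exact Fin.ext h10
        calc NR.card = (NR.image emb).card := (Finset.card_image_of_injective _ hembinj).symm
        _ = ∑ _jn ∈ NR.image emb, 1 := Finset.card_eq_sum_ones _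
        _ ≤ ∑ jn ∈ NR.image emb, ((Matrix.vecMul u (mkG A0 A1)) jn).support.card := by
          apply Finset.sum_le_sum
          intro jn hjn
          obtain ⟨j, hj, rfl⟩ := Finset.mem_image.1 hjn
          have hjne : ¬ f.eval (α j) = 0 := (Finset.mem_filter.1 hj).2
          have hco : ((Matrix.vecMul u (mkG A0 A1)) (emb j)).coeff m0 ≠ 0 := by
            rw [hslice]
            have hev : ∑ r, cv r * A0 r (emb j) = f.eval (α j) := by
              rw [hf, eval_ofTuple]
              apply Finset.sum_congr rfl
              intro r _
              have hlt : ((emb j : Fin n) : ℕ) < q := j.isLt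
              have hA0e : A0 r (emb j) = α j ^ (r : ℕ) := by
                simp only [hA0]
                rw [dif_pos hlt]
              rw [hA0e]
            rw [hev]
            exact hjne
          have hm0mem : m0 ∈ ((Matrix.vecMul u (mkG A0 A1)) (emb j)).support :=
            Polynomial.mem_support_iff.2 hco
          exact Finset.card_pos.2 ⟨m0, hm0mem⟩
        _ ≤ ∑ jn : Fin n, ((Matrix.vecMul u (mkG A0 A1)) jn).support.card :=
          Finset.sum_le_sum_of_subset (Finset.subset_univ _)
        _ = polyWt (Matrix.vecMul u (mkG A0 A1)) := rfl
      omega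
    exact le_csInf ⟨polyWt x0, x0, hx0mem, hx0ne, rfl⟩
      (by rintro w ⟨x, hx, hxne, rfl⟩; exact hbound x hx hxne)
  have hfree2 : 3 ≤ freeDist (ConvDual (ConvCode (mkG A0' A1'))) := by
    have h0q : (0:ℕ) < q := by omega
    have h1q : (1:ℕ) < q := by omega
    have h2q' : (2:ℕ) < q := by omega
    set a0 : F := α ⟨0, h0q⟩ with ha0
    set a1 : F := α ⟨1, h1q⟩ with ha1
    set a2 : F := α ⟨2, h2q'⟩ with ha2
    have hA0at : ∀ (g : Fin 2) (j : Fin n) (ii : Fin q), (j : ℕ) = (ii : ℕ) →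
        A0' g j = α ii ^ (g : ℕ) := by
      intro g j ii hji
      have hlt : (j : ℕ) < q := by rw [hji]; exact ii.isLt
      simp only [hA0', hA0]
      rw [dif_pos hlt]
      have h13 : (⟨(j : ℕ), hlt⟩ : Fin q) = ii := Fin.ext hji
      rw [h13]
    have hA0q' : ∀ (g : Fin 2) (j : Fin n), ¬ (j : ℕ) < q →
        A0' g j = (if (g : ℕ) = 1 then 1 else 0) := by
      intro g j hj
      simp only [hA0', hA0]
      rw [dif_neg hj]
    have hA0q0 : ∀ j : Fin n, ¬ (j : ℕ) < q → A0' 0 j = 0 := by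
      intro j hj
      rw [hA0q' 0 j hj]
      simp
    have hA0q1 : ∀ j : Fin n, ¬ (j : ℕ) < q → A0' 1 j = 1 := by
      intro j hj
      rw [hA0q' 1 j hj]
      simp
    have hcoeff0 : ∀ (v : Fin 2 → F[X]) (j : Fin n),
        ((Matrix.vecMul v (mkG A0' A1')) j).coeff 0 = ∑ g, (v g).coeff 0 * A0' g j := by
      intro v j
      rw [vecMul_apply', finset_sum_coeff]
      exact Finset.sum_congr rfl fun g _ => mul_mkG_coeff_zero A0' A1' g j (v g)
    have hj0n : (0:ℕ) < n := by omega
    have hj1n : (1:ℕ) < n := by omega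
    have hj2n : (2:ℕ) < n := by omega
    obtain ⟨j0, hj0⟩ : ∃ j : Fin n, j = ⟨0, hj0n⟩ := ⟨_, rfl⟩
    obtain ⟨j1, hj1⟩ : ∃ j : Fin n, j = ⟨1, hj1n⟩ := ⟨_, rfl⟩
    obtain ⟨j2c, hj2c⟩ : ∃ j : Fin n, j = ⟨2, hj2n⟩ := ⟨_, rfl⟩
    obtain ⟨c3, hc3⟩ : ∃ c3' : Fin n → F, c3' = fun j : Fin n =>
        if (j : ℕ) = 0 then a2 - a1 else if (j : ℕ) = 1 then a0 - a2 else
        if (j : ℕ) = 2 then a1 - a0 else 0 := ⟨_, rfl⟩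
    have hc30 : c3 j0 = a2 - a1 := by simp [hc3, hj0]
    have hc31 : c3 j1 = a0 - a2 := by simp [hc3, hj1]
    have hc32 : c3 j2c = a1 - a0 := by simp [hc3, hj2c]
    have horth : ∀ g : Fin 2, ∑ j, c3 j * A0' g j = 0 := by
      intro g
      have hzero : ∀ j ∈ Finset.univ, j ∉ ({j0, j1, j2c} : Finset (Fin n)) →
          c3 j * A0' g j = 0 := by
        intro j _ hj
        simp only [Finset.mem_insert, Finset.mem_singleton] at hj
        push_neg at hj
        obtain ⟨hh0, hh1, hh2⟩ := hj
        have hn0 : ¬ (j : ℕ) = 0 := fun h => hh0 (by rw [hj0]; exact Fin.ext h)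
        have hn1 : ¬ (j : ℕ) = 1 := fun h => hh1 (by rw [hj1]; exact Fin.ext h)
        have hn2 : ¬ (j : ℕ) = 2 := fun h => hh2 (by rw [hj2c]; exact Fin.ext h)
        simp only [hc3]
        rw [if_neg hn0, if_neg hn1, if_neg hn2, zero_mul]
      rw [← Finset.sum_subset (Finset.subset_univ ({j0, j1, j2c} : Finset (Fin n))) hzero]
      have hne01 : j0 ≠ j1 := by
        rw [hj0, hj1]
        intro h
        exact absurd (congrArg Fin.val h) (by norm_num)
      have hne02 : j0 ≠ j2c := by
        rw [hj0, hj2c]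
        intro h
        exact absurd (congrArg Fin.val h) (by norm_num)
      have hne12 : j1 ≠ j2c := by
        rw [hj1, hj2c]
        intro h
        exact absurd (congrArg Fin.val h) (by norm_num)
      rw [Finset.sum_insert (by simp [hne01, hne02]), Finset.sum_insert (by simp [hne12]),
        Finset.sum_singleton]
      rw [hc30, hc31, hc32, hA0at g j0 ⟨0, h0q⟩ (by rw [hj0]), hA0at g j1 ⟨1, h1q⟩ (by rw [hj1]),
        hA0at g j2c ⟨2, h2q'⟩ (by rw [hj2c]), ← ha0, ← ha1, ← ha2]
      fin_cases g
      all_goals (try norm_num)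
      all_goals (try ring)
    obtain ⟨uc, huc⟩ : ∃ u' : Fin n → F[X], u' = fun j : Fin n => C (c3 j) := ⟨_, rfl⟩
    have hucmem : uc ∈ ConvDual (ConvCode (mkG A0' A1')) := by
      rintro x ⟨v, rfl⟩
      rw [convPairing_eq]
      simp only [huc]
      have hstep : ∀ j : Fin n, ∑ i ∈ (C (c3 j)).support, (C (c3 j)).coeff i
          * ((Matrix.vecMul v (mkG A0' A1')) j).coeff i
          = c3 j * ((Matrix.vecMul v (mkG A0' A1')) j).coeff 0 :=
        fun j => support_C_sum_eq (c3 j) _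
      rw [Finset.sum_congr rfl fun j _ => hstep j]
      have hsw : ∀ j : Fin n, c3 j * ((Matrix.vecMul v (mkG A0' A1')) j).coeff 0
          = ∑ g, (v g).coeff 0 * (c3 j * A0' g j) := by
        intro j
        rw [hcoeff0, Finset.mul_sum]
        exact Finset.sum_congr rfl fun g _ => by ring
      rw [Finset.sum_congr rfl fun j _ => hsw j, Finset.sum_comm]
      apply Finset.sum_eq_zero
      intro g _
      rw [← Finset.mul_sum, horth g, mul_zero]
    have hucne : uc ≠ 0 := by
      intro h
      have h5 := congrFun h j0
      simp only [huc, Pi.zero_apply] at h5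
      have h6 : c3 j0 = 0 := Polynomial.C_eq_zero.1 h5
      rw [hc30] at h6
      have h7 : a2 = a1 := sub_eq_zero.1 h6
      have h8 := hαinj h7
      exact absurd (congrArg Fin.val h8) (by norm_num)
    have hbound2 : ∀ z ∈ ConvDual (ConvCode (mkG A0' A1')), z ≠ 0 → 3 ≤ polyWt z := by
      intro z hz hzne
      obtain ⟨Nd, hNd⟩ : ∃ N, N = Finset.univ.sup (fun j : Fin n => (z j).natDegree) :=
        ⟨_, rfl⟩
      obtain ⟨js, hjs⟩ := Function.ne_iff.1 hzne
      have hjs' : z js ≠ 0 := hjs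
      obtain ⟨ja0, -, hja0⟩ := Finset.exists_mem_eq_sup (Finset.univ : Finset (Fin n))
        ⟨js, Finset.mem_univ _⟩ (fun j => (z j).natDegree)
      have hzdeg : ∀ j, (z j).natDegree ≤ Nd := by
        intro j
        rw [hNd]
        exact Finset.le_sup (f := fun j => (z j).natDegree) (Finset.mem_univ _)
      have hj2ex : ∃ jd, z jd ≠ 0 ∧ (z jd).natDegree = Nd := by
        by_cases h : z ja0 = 0
        · refine ⟨js, hjs', ?_⟩
          have h1 : Nd = 0 := by rw [hNd, hja0, h, natDegree_zero]
          have h2 : (z js).natDegree ≤ Nd := hzdeg js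
          omega
        · refine ⟨ja0, h, ?_⟩
          rw [hNd, hja0]
      obtain ⟨jd, hjdne, hjddeg⟩ := hj2ex
      obtain ⟨wv, hwv⟩ : ∃ w : Fin n → F, w = fun j : Fin n => (z j).coeff Nd := ⟨_, rfl⟩
      have hwvap : ∀ j, wv j = (z j).coeff Nd := fun j => by rw [hwv]
      have hwjd : wv jd ≠ 0 := by
        rw [hwvap jd, ← hjddeg]
        exact Polynomial.leadingCoeff_ne_zero.2 hjdne
      have horthz : ∀ g : Fin 2, ∑ j, wv j * A0' g j = 0 := by
        intro g
        have hxg : (fun j => X ^ Nd * mkG A0' A1' g j) ∈ ConvCode (mkG A0' A1') := by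
          refine ⟨fun g' => if g' = g then X ^ Nd else 0, ?_⟩
          funext j
          rw [vecMul_apply']
          have hterm : ∀ g' : Fin 2, (if g' = g then (X:F[X]) ^ Nd else 0) * mkG A0' A1' g' j
              = if g' = g then X ^ Nd * mkG A0' A1' g' j else 0 := fun g' => by split <;> simp
          rw [Finset.sum_congr rfl fun g' _ => hterm g',
            Finset.sum_ite_eq' Finset.univ g (fun g' => X ^ Nd * mkG A0' A1' g' j),
            if_pos (Finset.mem_univ _)]
        have h0 := hz _ hxg
        rw [convPairing_eq] at h0
        have hxc : ∀ (j : Fin n) (d : ℕ), (X ^ Nd * mkG A0' A1' g j).coeff d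
            = (if d = Nd then A0' g j else 0) + (if d = Nd + 1 then A1' g j else 0) := by
          intro j d
          have hsplit : X ^ Nd * mkG A0' A1' g j
              = C (A0' g j) * X ^ Nd + C (A1' g j) * X ^ (Nd + 1) := by
            have hmk : mkG A0' A1' g j = C (A0' g j) + C (A1' g j) * X := rfl
            rw [hmk]
            ring
          rw [hsplit, coeff_add, coeff_C_mul, coeff_C_mul, coeff_X_pow, coeff_X_pow]
          simp only [mul_ite, mul_one, mul_zero]
        have hinner : ∀ j : Fin n, ∑ i ∈ (z j).support, (z j).coeff i
            * (X ^ Nd * mkG A0' A1' g j).coeff i = (z j).coeff Nd * A0' g j := by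
          intro j
          have h1 : ∀ i ∈ (z j).support, (z j).coeff i * (X ^ Nd * mkG A0' A1' g j).coeff i
              = (z j).coeff i * (if i = Nd then A0' g j else 0)
                + (z j).coeff i * (if i = Nd + 1 then A1' g j else 0) := by
            intro i _
            rw [hxc j i, mul_add]
          rw [Finset.sum_congr rfl h1, Finset.sum_add_distrib,
            sum_support_mul_ite (z j) Nd (A0' g j),
            sum_support_mul_ite (z j) (Nd + 1) (A1' g j)]
          have h2 : (z j).coeff (Nd + 1) = 0 :=
            coeff_eq_zero_of_natDegree_lt (lt_of_le_of_lt (hzdeg j) (Nat.lt_succ_self _))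
          rw [h2, zero_mul, add_zero]
        rw [Finset.sum_congr rfl fun j _ => hinner j] at h0
        calc ∑ j, wv j * A0' g j = ∑ j, (z j).coeff Nd * A0' g j := by
              exact Finset.sum_congr rfl fun j _ => by rw [hwvap j]
        _ = 0 := h0
      obtain ⟨Wset, hWset⟩ : ∃ W, W = Finset.univ.filter (fun j : Fin n => wv j ≠ 0) :=
        ⟨_, rfl⟩
      have hWmem : ∀ j : Fin n, j ∈ Wset ↔ wv j ≠ 0 := by
        intro j
        rw [hWset, Finset.mem_filter]
        exact ⟨fun h => h.2, fun h => ⟨Finset.mem_univ _, h⟩⟩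
      have hWne : jd ∈ Wset := (hWmem jd).2 hwjd
      have hWsum : ∀ g : Fin 2, ∑ j ∈ Wset, wv j * A0' g j = 0 := by
        intro g
        rw [Finset.sum_subset (Finset.subset_univ Wset) (fun j _ hj => ?_)]
        · exact horthz g
        · have h5 : ¬ wv j ≠ 0 := fun h => hj ((hWmem j).2 h)
          push_neg at h5
          rw [h5, zero_mul]
      by_contra hlt3
      push_neg at hlt3
      have hWle : Wset.card ≤ polyWt z := by
        calc Wset.card = ∑ _j ∈ Wset, 1 := Finset.card_eq_sum_ones _
        _ ≤ ∑ j ∈ Wset, (z j).support.card := by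
          apply Finset.sum_le_sum
          intro j hj
          have hwj : wv j ≠ 0 := (hWmem j).1 hj
          rw [hwvap j] at hwj
          exact Finset.card_pos.2 ⟨Nd, Polynomial.mem_support_iff.2 hwj⟩
        _ ≤ ∑ j : Fin n, (z j).support.card := Finset.sum_le_sum_of_subset (Finset.subset_univ _)
        _ = polyWt z := rfl
      have hWpos : 0 < Wset.card := Finset.card_pos.2 ⟨jd, hWne⟩
      rcases (by omega : Wset.card = 1 ∨ Wset.card = 2) with h1 | h2
      · obtain ⟨ja, hja⟩ := Finset.card_eq_one.1 h1
        have hmem : ja ∈ Wset := by rw [hja]; exact Finset.mem_singleton_self _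
        have hwa : wv ja ≠ 0 := (hWmem ja).1 hmem
        have heq : ∀ g : Fin 2, wv ja * A0' g ja = 0 := by
          intro g
          have h5 := hWsum g
          rw [hja, Finset.sum_singleton] at h5
          exact h5
        by_cases hlt : (ja : ℕ) < q
        · have h5 := heq 0
          rw [hA0at 0 ja ⟨(ja : ℕ), hlt⟩ rfl] at h5
          simp only [Fin.val_zero, pow_zero, mul_one] at h5
          exact hwa h5
        · have h5 := heq 1
          rw [hA0q1 ja hlt, mul_one] at h5
          exact hwa h5
      · obtain ⟨ja, jb, hab, hWeq⟩ := Finset.card_eq_two.1 h2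
        have hma : ja ∈ Wset := by rw [hWeq]; exact Finset.mem_insert_self _ _
        have hmb : jb ∈ Wset := by
          rw [hWeq]; exact Finset.mem_insert_of_mem (Finset.mem_singleton_self _)
        have hwa : wv ja ≠ 0 := (hWmem ja).1 hma
        have hwb : wv jb ≠ 0 := (hWmem jb).1 hmb
        have heq : ∀ g : Fin 2, wv ja * A0' g ja + wv jb * A0' g jb = 0 := by
          intro g
          have h5 := hWsum g
          rw [hWeq, Finset.sum_insert (by simp [hab]), Finset.sum_singleton] at h5
          exact h5
        by_cases hlta : (ja : ℕ) < q <;> by_cases hltb : (jb : ℕ) < q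
        · have e0 := heq 0
          have e1 := heq 1
          rw [hA0at 0 ja ⟨(ja : ℕ), hlta⟩ rfl, hA0at 0 jb ⟨(jb : ℕ), hltb⟩ rfl] at e0
          simp only [Fin.val_zero, pow_zero, mul_one] at e0
          rw [hA0at 1 ja ⟨(ja : ℕ), hlta⟩ rfl, hA0at 1 jb ⟨(jb : ℕ), hltb⟩ rfl] at e1
          simp only [Fin.val_one, pow_one] at e1
          have hsub : wv ja * (α ⟨(ja : ℕ), hlta⟩ - α ⟨(jb : ℕ), hltb⟩) = 0 := by
            linear_combination e1 - α ⟨(jb : ℕ), hltb⟩ * e0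
          have hαeq : α ⟨(ja : ℕ), hlta⟩ = α ⟨(jb : ℕ), hltb⟩ := by
            rcases mul_eq_zero.1 hsub with h | h
            · exact absurd h hwa
            · exact sub_eq_zero.1 h
          have h15 := hαinj hαeq
          have h16 := congrArg Fin.val h15
          exact hab (Fin.ext h16)
        · have e0 := heq 0
          rw [hA0at 0 ja ⟨(ja : ℕ), hlta⟩ rfl, hA0q0 jb hltb] at e0
          simp only [Fin.val_zero, pow_zero, mul_one, mul_zero, add_zero] at e0
          exact hwa e0
        · have e0 := heq 0
          rw [hA0q0 ja hlta, hA0at 0 jb ⟨(jb : ℕ), hltb⟩ rfl] at e0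
          simp only [Fin.val_zero, pow_zero, mul_one, mul_zero, zero_add] at e0
          exact hwb e0
        · have h7 := ja.isLt
          have h8 := jb.isLt
          exact hab (Fin.ext (by omega))
    exact le_csInf ⟨polyWt uc, uc, hucmem, hucne, rfl⟩
      (by rintro w ⟨z, hz, hzne, rfl⟩; exact hbound2 z hz hzne)
  refine ⟨ConvCode (mkG A0 A1), ConvCode (mkG A0' A1'), k, 2, mkG A0 A1, mkG A0' A1',
    hsub, ⟨⟨hlinb, rfl⟩, hbasb, ?_⟩, hsupb, ⟨⟨hlin2, rfl⟩, hbas2, ?_⟩, hsup2,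
    hk, rfl, ⟨⟨k, mkG A0 A1, ⟨hlinb, rfl⟩, hbasb, hextb⟩, ?_⟩,
    ⟨⟨2, mkG A0' A1', ⟨hlin2, rfl⟩, hbas2, hext2⟩, hlow2⟩, hfree1, hfree2⟩
  · intro d hd
    rw [hextb, ← hSbcard]
    exact hlowb d hd
  · intro d hd
    rw [hext2]
    exact hlow2 d hd
  · intro d hd
    rw [← hSbcard]
    exact hlowb d hd

end AQCC
end

section
/- (Classical content of Theorem 10.) Let q ≥ 5 be a prime power, and let k ≥ 1 and n ≥ 5 be integers with n ≤ q and k ≤ n−4; let t be an integer with 1 ≤ t ≤ n−k−1. Then there exist convolutional codes V_2 ⊆ V_1 over F_q of length n, both with reduced basic (hence noncatastrophic) generator matrices of memory 1, such that dim V_1 − dim V_2 = n−t−k−1, the degrees of V_1 and V_2 sum to 2, d_f(V_1) ≥ k+1, and d_f(V_2^⊥) ≥ t+2; these are the CSS ingredients of an asymmetric quantum convolutional code with parameters [(n, n−t−k−1, μ*; 2, d_z/d_x)]_q where d_z ≥ t+2 and d_x ≥ k+1. -/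
open Polynomial Matrix

namespace AQCC

variable {F : Type*} [Field F]

section Aux



-- root counting
open Classical in
lemma count_roots_le (α : Fin n → F) (hα : Function.Injective α) (p : F[X]) (hp : p ≠ 0) :
    (Finset.univ.filter fun j => p.eval (α j) = 0).card ≤ p.natDegree := by
  calc (Finset.univ.filter fun j => p.eval (α j) = 0).card
      ≤ p.roots.toFinset.card := by
        apply Finset.card_le_card_of_injOn (fun j => α j)
        · intro j hj
          rw [Finset.mem_coe, Finset.mem_filter] at hj
          simp [Multiset.mem_toFinset, mem_roots, hp, IsRoot.def, hj.2]
        · exact fun a _ b _ h => hα h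
    _ ≤ Multiset.card p.roots := p.roots.toFinset_card_le
    _ ≤ p.natDegree := p.card_roots'

-- eval of sum of monomials
lemma eval_sum_monomials {κ : ℕ} (ρ : Fin κ → ℕ) (a : Fin κ → F) (z : F) :
    (∑ r, C (a r) * X ^ ρ r).eval z = ∑ r, a r * z ^ ρ r := by
  rw [eval_finset_sum]
  simp

-- coeff of sum of monomials with injective exponents
lemma coeff_sum_monomials {κ : ℕ} (ρ : Fin κ → ℕ) (hρ : Function.Injective ρ)
    (a : Fin κ → F) (r0 : Fin κ) :
    (∑ r, C (a r) * X ^ ρ r).coeff (ρ r0) = a r0 := by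
  rw [finset_sum_coeff]
  have : ∀ r : Fin κ, (C (a r) * X ^ ρ r).coeff (ρ r0) = if r = r0 then a r else 0 := by
    intro r
    rw [coeff_C_mul, coeff_X_pow]
    by_cases h : r = r0
    · simp [h]
    · have : ρ r0 ≠ ρ r := fun hh => h (hρ hh.symm)
      simp [h, this]
  simp only [this]
  simp

-- moments lemma (Lagrange)
open Classical in
lemma moments_zero (α : Fin n → F) (hα : Function.Injective α) (x : Fin n → F) (κ : ℕ)
    (hcard : (Finset.univ.filter fun j => x j ≠ 0).card ≤ κ)
    (hmom : ∀ r < κ, ∑ j, x j * α j ^ r = 0) : x = 0 := by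
  classical
  by_contra hx
  obtain ⟨j0, hj0⟩ : ∃ j, x j ≠ 0 := by
    by_contra h; push_neg at h; exact hx (funext fun j => h j)
  set S := Finset.univ.filter fun j => x j ≠ 0 with hS
  have hj0S : j0 ∈ S := by simp [hS, hj0]
  set p : F[X] := ∏ j ∈ S.erase j0, (X - C (α j)) with hp
  have hdeg : p.natDegree = (S.erase j0).card := by
    rw [hp, natDegree_prod _ _ (fun j _ => X_sub_C_ne_zero (α j))]
    simp [natDegree_X_sub_C]
  have hdeglt : p.natDegree < κ := by
    rw [hdeg, Finset.card_erase_of_mem hj0S]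
    have h1 : 1 ≤ S.card := Finset.card_pos.mpr ⟨j0, hj0S⟩
    omega
  have hsum : ∑ j, x j * p.eval (α j) = 0 := by
    have heval : ∀ z : F, p.eval z = ∑ r ∈ Finset.range κ, p.coeff r * z ^ r := by
      intro z; exact eval_eq_sum_range' hdeglt z
    calc ∑ j, x j * p.eval (α j)
        = ∑ j, ∑ r ∈ Finset.range κ, p.coeff r * (x j * α j ^ r) := by
          apply Finset.sum_congr rfl; intro j _
          rw [heval, Finset.mul_sum]; apply Finset.sum_congr rfl; intro r _; ring
      _ = ∑ r ∈ Finset.range κ, p.coeff r * ∑ j, x j * α j ^ r := by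
          rw [Finset.sum_comm]; apply Finset.sum_congr rfl; intro r _
          rw [Finset.mul_sum]
      _ = 0 := by
          apply Finset.sum_eq_zero; intro r hr
          rw [hmom r (Finset.mem_range.mp hr), mul_zero]
  have hsum2 : ∑ j, x j * p.eval (α j) = x j0 * p.eval (α j0) := by
    have hsub : S ⊆ Finset.univ := Finset.filter_subset _ _
    rw [← Finset.sum_subset hsub]
    · rw [← Finset.add_sum_erase _ _ hj0S]
      have : ∑ j ∈ S.erase j0, x j * p.eval (α j) = 0 := by
        apply Finset.sum_eq_zero; intro j hj
        have : p.eval (α j) = 0 := by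
          rw [hp, eval_prod]
          exact Finset.prod_eq_zero hj (by simp)
        rw [this, mul_zero]
      rw [this, add_zero]
    · intro j _ hj
      have : x j = 0 := by
        by_contra h; exact hj (by simp [hS, h])
      rw [this, zero_mul]
  have hne : p.eval (α j0) ≠ 0 := by
    rw [hp, eval_prod]
    apply Finset.prod_ne_zero_iff.mpr
    intro j hj
    simp only [eval_sub, eval_X, eval_C, sub_ne_zero]
    exact fun h => (Finset.mem_erase.mp hj).1 (hα h).symm
  rw [hsum2] at hsum
  exact hj0 ((mul_eq_zero.mp hsum).resolve_right hne)


section Constr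

variable {n : ℕ} (α : Fin n → F) (t κ M : ℕ)

def expo (r : Fin (κ+1)) : ℕ := if (r:ℕ) < κ then r else M

noncomputable def Gm : Matrix (Fin κ) (Fin n) F[X] :=
  fun i j => C (α j ^ (i:ℕ)) + if (i:ℕ) = t then X * C (α j ^ M) else 0

noncomputable def Phi (c : Fin (κ+1) → F[X]) : Fin n → F[X] :=
  fun j => ∑ r, c r * C (α j ^ expo κ M r)

noncomputable def coords (ht : t < κ) (u : Fin κ → F[X]) : Fin (κ+1) → F[X] :=
  fun r => if h : (r:ℕ) < κ then u ⟨r, h⟩ else X * u ⟨t, ht⟩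

variable {t κ M}

lemma expo_castSucc (i : Fin κ) : expo κ M (Fin.castSucc i) = (i : ℕ) := by
  simp [expo, i.isLt]

lemma expo_last : expo κ M (Fin.last κ) = M := by
  simp [expo]

lemma expo_inj (hκM : κ ≤ M) : Function.Injective (expo κ M) := by
  intro r r' h
  unfold expo at h
  rcases lt_or_ge (r : ℕ) κ with h1 | h1 <;> rcases lt_or_ge (r' : ℕ) κ with h2 | h2
  · rw [if_pos h1, if_pos h2] at h; exact Fin.ext h
  · rw [if_pos h1, if_neg (by omega)] at h; omega
  · rw [if_neg (by omega), if_pos h2] at h; omega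
  · have : (r:ℕ) = κ := by have := r.isLt; omega
    have h2' : (r':ℕ) = κ := by have := r'.isLt; omega
    exact Fin.ext (by omega)

lemma expo_lt (hκM : κ ≤ M) (hMn : M < n) (r : Fin (κ+1)) : expo κ M r < n := by
  unfold expo; split <;> omega

lemma vecMul_Gm (ht : t < κ) (u : Fin κ → F[X]) :
    Matrix.vecMul u (Gm α t κ M) = Phi α κ M (coords t κ ht u) := by
  funext j
  show ∑ i, u i * Gm α t κ M i j = _
  have hL : ∑ i, u i * Gm α t κ M i j
      = (∑ i, u i * C (α j ^ (i:ℕ))) + u ⟨t, ht⟩ * (X * C (α j ^ M)) := by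
    unfold Gm
    simp only [mul_add, Finset.sum_add_distrib, mul_ite, mul_zero]
    congr 1
    have hc : ∀ i : Fin κ, (if (i:ℕ) = t then u i * (X * C (α j ^ M)) else 0)
        = if i = ⟨t, ht⟩ then u i * (X * C (α j ^ M)) else 0 := by
      intro i; simp [Fin.ext_iff]
    rw [Finset.sum_congr rfl fun i _ => hc i, Finset.sum_ite_eq' Finset.univ]
    simp
  rw [hL]
  show _ = ∑ r, coords t κ ht u r * C (α j ^ expo κ M r)
  rw [Fin.sum_univ_castSucc]
  have h1 : ∀ i : Fin κ, coords t κ ht u (Fin.castSucc i) * C (α j ^ expo κ M (Fin.castSucc i))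
      = u i * C (α j ^ (i:ℕ)) := by
    intro i
    rw [expo_castSucc]
    unfold coords
    rw [dif_pos (by simpa using i.isLt)]
    congr 1
  have h2 : coords t κ ht u (Fin.last κ) = X * u ⟨t, ht⟩ := by
    unfold coords
    rw [dif_neg (by simp)]
  rw [Finset.sum_congr rfl fun i _ => h1 i, h2, expo_last]
  ring


open Classical in
lemma Phi_eq_zero (hα : Function.Injective α) (hκM : κ ≤ M) (hMn : M < n) {c : Fin (κ+1) → F[X]}
    (h : Phi α κ M c = 0) : c = 0 := by
  funext r
  ext m
  have hq : ∀ j, (∑ r, C ((c r).coeff m) * X ^ expo κ M r).eval (α j) = 0 := by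
    intro j
    rw [eval_sum_monomials]
    have := congrFun h j
    unfold Phi at this
    have h2 : (0:F) = ((0:F[X])).coeff m := by simp
    calc ∑ r, (c r).coeff m * α j ^ expo κ M r
        = ((∑ r, c r * C (α j ^ expo κ M r)).coeff m) := by
          rw [finset_sum_coeff]
          exact Finset.sum_congr rfl fun r _ => (coeff_mul_C _ _ _).symm
      _ = 0 := by rw [this]; simp
  set q := ∑ r, C ((c r).coeff m) * X ^ expo κ M r with hqdef
  have hq0 : q = 0 := by
    by_contra hne
    have hdeg : q.natDegree < n := by
      have : q.natDegree ≤ M := by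
        apply Polynomial.natDegree_sum_le_of_forall_le
        intro r _
        calc (C ((c r).coeff m) * X ^ expo κ M r).natDegree
            ≤ (C ((c r).coeff m)).natDegree + (X ^ expo κ M r : F[X]).natDegree :=
              natDegree_mul_le
          _ ≤ expo κ M r := by simp [natDegree_X_pow]
          _ ≤ M := by unfold expo; split <;> omega
      omega
    have hcard := count_roots_le α hα q hne
    have : (Finset.univ.filter fun j => q.eval (α j) = 0) = Finset.univ := by
      apply Finset.filter_true_of_mem
      intro j _; exact hq j
    rw [this] at hcard
    simp at hcard
    omega
  have := coeff_sum_monomials (expo κ M) (expo_inj hκM) (fun r => (c r).coeff m) r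
  rw [← hqdef, hq0] at this
  simpa using this.symm

lemma linIndep_Gm (hα : Function.Injective α) (ht : t < κ) (hκM : κ ≤ M) (hMn : M < n) :
    LinearIndependent F[X] (fun i : Fin κ => Gm α t κ M i) := by
  rw [Fintype.linearIndependent_iff]
  intro g hg i
  have hvm : Matrix.vecMul g (Gm α t κ M) = 0 := by
    funext j
    have := congrFun hg j
    simpa [Matrix.vecMul, dotProduct, Finset.sum_apply] using this
  rw [vecMul_Gm α ht] at hvm
  have hc := Phi_eq_zero α hα hκM hMn hvm
  have := congrFun hc ⟨(i:ℕ), by omega⟩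
  unfold coords at this
  rw [dif_pos i.isLt] at this
  simpa using this

lemma basic_Gm (hα : Function.Injective α) (ht : t < κ) (hκM : κ ≤ M) (hMn : M < n) :
    IsBasicGen (Gm α t κ M) := by
  classical
  set W : Matrix (Fin n) (Fin n) F := (Matrix.vandermonde α)ᵀ with hW
  have hdet : W.det ≠ 0 := by
    rw [hW, Matrix.det_transpose, Matrix.det_vandermonde]
    apply Finset.prod_ne_zero_iff.mpr
    intro i _
    apply Finset.prod_ne_zero_iff.mpr
    intro j hj
    have : i ≠ j := by
      intro h; subst h; exact absurd (Finset.mem_Ioi.mp hj) (lt_irrefl _)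
    exact sub_ne_zero.mpr fun h => this (hα h.symm)
  have hWinv : W * W⁻¹ = 1 := Matrix.mul_nonsing_inv _ (isUnit_iff_ne_zero.mpr hdet)
  set ι : Fin (κ+1) → Fin n := fun r => ⟨expo κ M r, expo_lt hκM hMn r⟩ with hι
  have hιinj : Function.Injective ι := by
    intro a b hab
    exact expo_inj hκM (by simpa [hι, Fin.ext_iff] using hab)
  refine ⟨fun jj i' => C (W⁻¹ jj (ι (Fin.castSucc i'))), ?_⟩
  ext i i' : 1
  show ∑ jj, Gm α t κ M i jj * C (W⁻¹ jj (ι (Fin.castSucc i'))) = _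
  have hterm : ∀ jj, Gm α t κ M i jj * C (W⁻¹ jj (ι (Fin.castSucc i')))
      = C (W (ι (Fin.castSucc i)) jj * W⁻¹ jj (ι (Fin.castSucc i')))
        + if (i:ℕ) = t then X * C (W (ι (Fin.last κ)) jj * W⁻¹ jj (ι (Fin.castSucc i'))) else 0 := by
    intro jj
    unfold Gm
    have e1 : W (ι (Fin.castSucc i)) jj = α jj ^ (i:ℕ) := by
      simp [hW, hι, Matrix.vandermonde, expo_castSucc]
    have e2 : W (ι (Fin.last κ)) jj = α jj ^ M := by
      simp [hW, hι, Matrix.vandermonde, expo_last]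
    rw [e1, e2]
    split <;> simp [C_mul] <;> try ring
  rw [Finset.sum_congr rfl fun jj _ => hterm jj, Finset.sum_add_distrib]
  have hs1 : ∑ jj, C (W (ι (Fin.castSucc i)) jj * W⁻¹ jj (ι (Fin.castSucc i')))
      = C ((1 : Matrix (Fin n) (Fin n) F) (ι (Fin.castSucc i)) (ι (Fin.castSucc i'))) := by
    rw [← map_sum, ← Matrix.mul_apply, hWinv]
  have hs2 : (∑ jj, if (i:ℕ) = t then X * C (W (ι (Fin.last κ)) jj * W⁻¹ jj (ι (Fin.castSucc i'))) else 0)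
      = 0 := by
    rcases eq_or_ne (i:ℕ) t with h | h
    · simp only [if_pos h, ← Finset.mul_sum, ← map_sum, ← Matrix.mul_apply, hWinv]
      have : ι (Fin.last κ) ≠ ι (Fin.castSucc i') := by
        intro hh
        have := hιinj hh
        exact absurd this (Fin.ext_iff.not.mpr (by simp [Fin.val_last]; omega))
      rw [Matrix.one_apply_ne this]
      simp
    · simp [h]
  rw [hs1, hs2, add_zero]
  rcases eq_or_ne i i' with h | h
  · subst h
    rw [Matrix.one_apply_eq]
    simp [Matrix.one_apply]
  · have : ι (Fin.castSucc i) ≠ ι (Fin.castSucc i') := by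
      intro hh
      exact h (Fin.castSucc_injective _ (hιinj hh))
    rw [Matrix.one_apply_ne this]
    simp [Matrix.one_apply, h]

lemma rowDeg_Gm (hex : ∃ j : Fin n, α j ≠ 0) (i : Fin κ) :
    rowDeg (Gm α t κ M) i = if (i:ℕ) = t then 1 else 0 := by
  unfold rowDeg
  rcases eq_or_ne (i:ℕ) t with h | h
  · simp only [Gm, if_pos h]
    apply le_antisymm
    · apply Finset.sup_le
      intro j _
      calc (C (α j ^ (i:ℕ)) + X * C (α j ^ M)).natDegree
          ≤ max (C (α j ^ (i:ℕ))).natDegree (X * C (α j ^ M)).natDegree := natDegree_add_le _ _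
        _ ≤ 1 := by
            apply max_le (by simp)
            calc (X * C (α j ^ M)).natDegree ≤ (X : F[X]).natDegree + (C (α j ^ M)).natDegree :=
                natDegree_mul_le
              _ ≤ 1 := by simp
    · obtain ⟨j0, hj0⟩ := hex
      have hb : α j0 ^ M ≠ 0 := pow_ne_zero _ hj0
      have hco : (C (α j0 ^ (i:ℕ)) + X * C (α j0 ^ M)).coeff 1 = α j0 ^ M := by
        rw [coeff_add, coeff_C, mul_comm X, coeff_mul_X, coeff_C]
        simp
      have h1 : 1 ≤ (C (α j0 ^ (i:ℕ)) + X * C (α j0 ^ M)).natDegree :=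
        le_natDegree_of_ne_zero (by rw [hco]; exact hb)
      exact le_trans h1 (Finset.le_sup (f := fun j => (C (α j ^ (i:ℕ)) + X * C (α j ^ M)).natDegree) (Finset.mem_univ j0))
  · simp only [Gm, if_neg h, add_zero]
    apply Nat.le_zero.mp
    apply Finset.sup_le
    intro j _
    simp

lemma extDeg_Gm (ht : t < κ) (hex : ∃ j : Fin n, α j ≠ 0) :
    extDeg (Gm α t κ M) = 1 := by
  unfold extDeg
  rw [Finset.sum_congr rfl fun i _ => rowDeg_Gm α hex i]
  have hc : ∀ i : Fin κ, (if (i:ℕ) = t then (1:ℕ) else 0)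
      = if i = ⟨t, ht⟩ then 1 else 0 := by
    intro i; simp [Fin.ext_iff]
  rw [Finset.sum_congr rfl fun i _ => hc i, Finset.sum_ite_eq' Finset.univ]
  simp

lemma supRowDeg_Gm (ht : t < κ) (hex : ∃ j : Fin n, α j ≠ 0) :
    Finset.univ.sup (rowDeg (Gm α t κ M)) = 1 := by
  apply le_antisymm
  · apply Finset.sup_le
    intro i _
    rw [rowDeg_Gm α hex i]
    split <;> omega
  · have h1 : rowDeg (Gm α t κ M) ⟨t, ht⟩ = 1 := by
      rw [rowDeg_Gm α hex]; simp
    calc 1 = rowDeg (Gm α t κ M) ⟨t, ht⟩ := h1.symm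
      _ ≤ _ := Finset.le_sup (Finset.mem_univ _)

lemma const_coeff_mem {k' : ℕ} {G' : Matrix (Fin k') (Fin n) F[X]}
    (hconst : ∀ i j, (G' i j).natDegree = 0) {v : Fin n → F[X]}
    (hv : v ∈ ConvCode G') (N : ℕ) :
    (fun j => C ((v j).coeff N)) ∈ ConvCode G' := by
  obtain ⟨u, hu⟩ := hv
  refine ⟨fun i => C ((u i).coeff N), ?_⟩
  funext j
  have hG : ∀ i, G' i j = C ((G' i j).coeff 0) := by
    intro i
    exact (Polynomial.eq_C_of_natDegree_eq_zero (hconst i j))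
  have hvj : v j = ∑ i, u i * G' i j := by rw [hu]; rfl
  show C ((v j).coeff N) = ∑ i, C ((u i).coeff N) * G' i j
  rw [hvj, finset_sum_coeff, map_sum]
  apply Finset.sum_congr rfl
  intro i _
  rw [hG i, coeff_mul_C, C_mul]

lemma top_not_mem (hα : Function.Injective α) (ht : t < κ) (hκM : κ ≤ M) (hMn : M < n) :
    (fun j => C (α j ^ M)) ∉ ConvCode (Gm α t κ M) := by
  rintro ⟨u, hu⟩
  rw [vecMul_Gm α ht] at hu
  set d : Fin (κ+1) → F[X] := fun r => if r = Fin.last κ then 1 else 0 with hd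
  have h1 : Phi α κ M d = fun j => C (α j ^ M) := by
    funext j
    unfold Phi
    rw [hd]
    simp only [ite_mul, one_mul, zero_mul]
    rw [Finset.sum_ite_eq' Finset.univ]
    simp [expo_last]
  have h2 : Phi α κ M (coords t κ ht u - d) = 0 := by
    funext j
    unfold Phi
    simp only [Pi.sub_apply, sub_mul]
    rw [Finset.sum_sub_distrib]
    have e1 : ∑ r, coords t κ ht u r * C (α j ^ expo κ M r) = C (α j ^ M) := by
      have := congrFun hu j
      unfold Phi at this
      exact this.symm
    have e2 : ∑ r, d r * C (α j ^ expo κ M r) = C (α j ^ M) := by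
      have := congrFun h1 j
      unfold Phi at this
      exact this
    rw [e1, e2]
    simp
  have h3 := Phi_eq_zero α hα hκM hMn h2
  have h4 := congrFun h3 (Fin.last κ)
  simp only [Pi.sub_apply, Pi.zero_apply, sub_eq_zero, hd, if_pos rfl] at h4
  unfold coords at h4
  rw [dif_neg (by simp)] at h4
  have h5 := congrArg (fun p => Polynomial.coeff p 0) h4
  simp [coeff_X_mul, mul_coeff_zero] at h5

lemma subset_Gm (ht : t < κ) {κ' : ℕ} (hκ' : κ ≤ κ') :
    ConvCode (Gm α t κ M) ⊆ ConvCode (Gm α t κ' M) := by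
  rintro x ⟨u, hu⟩
  refine ⟨fun i => if h : (i:ℕ) < κ then u ⟨i, h⟩ else 0, ?_⟩
  rw [hu]
  funext j
  show ∑ i : Fin κ, u i * Gm α t κ M i j
      = ∑ i : Fin κ', (if h : (i:ℕ) < κ then u ⟨i, h⟩ else 0) * Gm α t κ' M i j
  have key : ∀ m : ℕ, ∀ (hm : m < κ) (hm' : m < κ'),
      u ⟨m, hm⟩ * Gm α t κ M ⟨m, hm⟩ j = u ⟨m, hm⟩ * Gm α t κ' M ⟨m, hm'⟩ j := by
    intro m hm hm'
    unfold Gm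
    simp
  have L : ∑ i : Fin κ, u i * Gm α t κ M i j
      = ∑ m ∈ Finset.range κ,
        (if h : m < κ then u ⟨m, h⟩ * Gm α t κ M ⟨m, h⟩ j else 0) := by
    rw [← Fin.sum_univ_eq_sum_range]
    exact Finset.sum_congr rfl fun i _ => by rw [dif_pos i.isLt]
  have R : ∑ i : Fin κ', (if h : (i:ℕ) < κ then u ⟨i, h⟩ else 0) * Gm α t κ' M i j
      = ∑ m ∈ Finset.range κ',
        (if h : m < κ' then (if h2 : m < κ then u ⟨m, h2⟩ else 0) * Gm α t κ' M ⟨m, h⟩ j else 0) := by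
    rw [← Fin.sum_univ_eq_sum_range]
    exact Finset.sum_congr rfl fun i _ => by rw [dif_pos i.isLt]
  rw [L, R]
  rw [← Finset.sum_subset (Finset.range_subset_range.mpr hκ')]
  · apply Finset.sum_congr rfl
    intro m hm
    have hmκ : m < κ := Finset.mem_range.mp hm
    rw [dif_pos hmκ, dif_pos (lt_of_lt_of_le hmκ hκ'), dif_pos hmκ]
    exact key m hmκ (lt_of_lt_of_le hmκ hκ')
  · intro m _ hm
    have hmκ : ¬ m < κ := fun h => hm (Finset.mem_range.mpr h)
    simp [hmκ]

open Classical in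
lemma wt_ge_card (u : Fin n → F[X]) (m : ℕ) :
    (Finset.univ.filter fun j => (u j).coeff m ≠ 0).card ≤ polyWt u := by
  rw [Finset.card_filter]
  unfold polyWt
  apply Finset.sum_le_sum
  intro j _
  split
  · next h =>
      exact Finset.card_pos.mpr ⟨m, mem_support_iff.mpr h⟩
  · exact Nat.zero_le _

open Classical in
lemma wt_lower (hα : Function.Injective α) (ht : t < κ) (hκM : κ ≤ M) (hMn : M < n) :
    ∀ v ∈ ConvCode (Gm α t κ M), v ≠ 0 → n ≤ polyWt v + (κ - 1) := by
  rintro v ⟨u, hu⟩ hv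
  rw [vecMul_Gm α ht] at hu
  have hune : ∃ m r, (u r).coeff m ≠ 0 := by
    by_contra h
    push_neg at h
    have : u = 0 := funext fun r => Polynomial.ext fun m => h m r
    apply hv
    rw [hu, this]
    unfold Phi coords
    funext j
    apply Finset.sum_eq_zero
    intro r _
    split <;> simp
  obtain ⟨m, hmex, hmin⟩ : ∃ m, (∃ r, (u r).coeff m ≠ 0)
      ∧ ∀ m' < m, ∀ r, (u r).coeff m' = 0 := by
    refine ⟨Nat.find hune, Nat.find_spec hune, ?_⟩
    intro m' hm' r
    by_contra h
    have : Nat.find hune ≤ m' := Nat.find_le (⟨r, h⟩ : ∃ r, (u r).coeff m' ≠ 0)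
    omega
  obtain ⟨r0, hr0⟩ := hmex
  set q : F[X] := ∑ r : Fin κ, C ((u r).coeff m) * X ^ (r : ℕ) with hq
  have hqne : q ≠ 0 := by
    intro h0
    have := coeff_sum_monomials (fun r : Fin κ => (r : ℕ))
      (fun a b hab => Fin.ext hab) (fun r => (u r).coeff m) r0
    rw [← hq, h0] at this
    exact hr0 (by simpa using this.symm)
  have hqdeg : q.natDegree ≤ κ - 1 := by
    apply Polynomial.natDegree_sum_le_of_forall_le
    intro r _
    calc (C ((u r).coeff m) * X ^ (r:ℕ)).natDegree
        ≤ (C ((u r).coeff m)).natDegree + (X ^ (r:ℕ) : F[X]).natDegree := natDegree_mul_le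
      _ ≤ (r : ℕ) := by simp [natDegree_X_pow]
      _ ≤ κ - 1 := by have := r.isLt; omega
  have hcoeff : ∀ j, (v j).coeff m = q.eval (α j) := by
    intro j
    rw [hu]
    unfold Phi
    rw [finset_sum_coeff, Fin.sum_univ_castSucc]
    have hlast : ((coords t κ ht u (Fin.last κ)) * C (α j ^ expo κ M (Fin.last κ))).coeff m
        = 0 := by
      unfold coords
      rw [dif_neg (by simp), coeff_mul_C]
      rcases Nat.eq_zero_or_pos m with h0 | h0
      · subst h0; simp [mul_coeff_zero]
      · obtain ⟨m', rfl⟩ : ∃ m', m = m' + 1 := ⟨m - 1, by omega⟩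
        rw [coeff_X_mul, hmin m' (by omega), zero_mul]
    rw [hlast, add_zero, eval_sum_monomials]
    apply Finset.sum_congr rfl
    intro r _
    rw [expo_castSucc, coeff_mul_C]
    unfold coords
    rw [dif_pos (by simpa using r.isLt)]
    congr 1
  have hcount : (Finset.univ.filter fun j => q.eval (α j) = 0).card ≤ κ - 1 :=
    le_trans (count_roots_le α hα q hqne) hqdeg
  have hsplit := Finset.card_filter_add_card_filter_not
    (s := (Finset.univ : Finset (Fin n))) (p := fun j => q.eval (α j) = 0)
  have hwt : (Finset.univ.filter fun j => ¬ (q.eval (α j) = 0)).card ≤ polyWt v := by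
    have : (Finset.univ.filter fun j => ¬ (q.eval (α j) = 0))
        = Finset.univ.filter fun j => (v j).coeff m ≠ 0 := by
      apply Finset.filter_congr
      intro j _
      rw [hcoeff j]
    rw [this]
    exact wt_ge_card v m
  simp only [Finset.card_univ, Fintype.card_fin] at hsplit
  omega

lemma sum_supp_ite (p : F[X]) (m : ℕ) (a : F) :
    ∑ i ∈ p.support, p.coeff i * (if i = m then a else 0) = p.coeff m * a := by
  simp_rw [mul_ite, mul_zero]
  rw [Finset.sum_ite_eq' p.support m (fun i => p.coeff i * a)]
  by_cases h : m ∈ p.support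
  · rw [if_pos h]
  · rw [if_neg h, notMem_support_iff.mp h, zero_mul]

lemma dual_conditions (ht : t < κ) {u : Fin n → F[X]}
    (hu : u ∈ ConvDual (ConvCode (Gm α t κ M))) (m : ℕ) (i0 : Fin κ) :
    (∑ j, (u j).coeff m * α j ^ (i0:ℕ))
      + (if (i0:ℕ) = t then ∑ j, (u j).coeff (m+1) * α j ^ M else 0) = 0 := by
  set w : Fin κ → F[X] := fun i => if i = i0 then X ^ m else 0 with hw
  set x := Matrix.vecMul w (Gm α t κ M) with hx
  have hmem : x ∈ ConvCode (Gm α t κ M) := ⟨w, rfl⟩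
  have hxj : ∀ j, x j = X ^ m * Gm α t κ M i0 j := by
    intro j
    rw [hx]
    show ∑ i, w i * Gm α t κ M i j = _
    rw [hw]
    simp only [ite_mul, zero_mul]
    rw [Finset.sum_ite_eq' Finset.univ]
    simp
  have hcoeff : ∀ j i, (x j).coeff i
      = (if i = m then α j ^ (i0:ℕ) else 0)
        + (if (i0:ℕ) = t then (if i = m + 1 then α j ^ M else 0) else 0) := by
    intro j i
    rw [hxj]
    unfold Gm
    rw [mul_add, coeff_add]
    congr 1
    · rw [mul_comm, coeff_C_mul, coeff_X_pow]
      split <;> simp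
    · split
      · have hr : X ^ m * (X * C (α j ^ M)) = C (α j ^ M) * X ^ (m+1) := by ring
        rw [hr, coeff_C_mul, coeff_X_pow]
        split <;> simp
      · simp
  have hpair := hu x hmem
  unfold convPairing at hpair
  calc (∑ j, (u j).coeff m * α j ^ (i0:ℕ))
        + (if (i0:ℕ) = t then ∑ j, (u j).coeff (m+1) * α j ^ M else 0)
      = ∑ j, ((u j).coeff m * α j ^ (i0:ℕ)
          + (if (i0:ℕ) = t then (u j).coeff (m+1) * α j ^ M else 0)) := by
        rw [Finset.sum_add_distrib]
        congr 1
        split <;> simp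
    _ = ∑ j, ∑ i ∈ (u j).support, (u j).coeff i * (x j).coeff i := by
        apply Finset.sum_congr rfl
        intro j _
        simp_rw [hcoeff j, mul_add, Finset.sum_add_distrib, sum_supp_ite]
        congr 1
        split
        · rw [sum_supp_ite]
        · simp
    _ = 0 := hpair

open Classical in
lemma dual_dist (hα : Function.Injective α) (ht : t < κ) :
    ∀ u ∈ ConvDual (ConvCode (Gm α t κ M)), u ≠ 0 → κ + 1 ≤ polyWt u := by
  intro u hu hune
  set s := Finset.univ.sup fun j => (u j).natDegree with hs
  have htop : ∀ j, (u j).coeff (s+1) = 0 := by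
    intro j
    apply coeff_eq_zero_of_natDegree_lt
    have : (u j).natDegree ≤ s := by
      rw [hs]; exact Finset.le_sup (f := fun j => (u j).natDegree) (Finset.mem_univ j)
    omega
  have hsne : ∃ j, (u j).coeff s ≠ 0 := by
    obtain ⟨j0, hj0⟩ : ∃ j, u j ≠ 0 := by
      by_contra h
      push_neg at h
      exact hune (funext h)
    obtain ⟨j1, _, hj1⟩ := Finset.exists_mem_eq_sup Finset.univ ⟨j0, Finset.mem_univ j0⟩
      fun j => (u j).natDegree
    rcases eq_or_ne (u j1) 0 with h1 | h1
    · have hs0 : s = 0 := by rw [hs, hj1, h1, natDegree_zero]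
      have hd0 : (u j0).natDegree = 0 := by
        have h2 : (u j0).natDegree ≤ s := by
          rw [hs]; exact Finset.le_sup (f := fun j => (u j).natDegree) (Finset.mem_univ j0)
        omega
      refine ⟨j0, ?_⟩
      rw [hs0, ← hd0]
      exact Polynomial.leadingCoeff_ne_zero.mpr hj0
    · refine ⟨j1, ?_⟩
      rw [hs, hj1]
      exact Polynomial.leadingCoeff_ne_zero.mpr h1
  set y : Fin n → F := fun j => (u j).coeff s with hy
  have hmom : ∀ r < κ, ∑ j, y j * α j ^ r = 0 := by
    intro r hr
    have := dual_conditions α ht hu s ⟨r, hr⟩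
    simp only [htop] at this
    simpa using this
  have hcard : ¬ ((Finset.univ.filter fun j => y j ≠ 0).card ≤ κ) := by
    intro hle
    obtain ⟨j, hj⟩ := hsne
    exact hj (congrFun (moments_zero α hα y κ hle hmom) j)
  have h3 := wt_ge_card u s
  have h4 : ¬((Finset.filter (fun j => (u j).coeff s ≠ 0) Finset.univ).card ≤ κ) := hcard
  omega

open Classical in
lemma dual_nonempty (hα : Function.Injective α) (ht : t < κ) (hκn : κ < n) :
    ∃ u ∈ ConvDual (ConvCode (Gm α t κ M)), u ≠ 0 := by
  obtain ⟨y, hy0, hymom⟩ : ∃ y : Fin n → F, y ≠ 0 ∧ ∀ r : Fin κ, ∑ j, y j * α j ^ (r:ℕ) = 0 := by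
    set L : (Fin n → F) →ₗ[F] (Fin κ → F) :=
      Matrix.mulVecLin (Matrix.of fun (r : Fin κ) j => α j ^ (r:ℕ)) with hL
    have hninj : ¬ Function.Injective L := by
      intro hinj
      have h1 := LinearMap.finrank_le_finrank_of_injective hinj
      simp [Module.finrank_pi] at h1
      omega
    rw [injective_iff_map_eq_zero] at hninj
    push_neg at hninj
    obtain ⟨y, hy1, hy2⟩ := hninj
    refine ⟨y, hy2, fun r => ?_⟩
    have h5 := congrFun hy1 r
    simp only [hL, Matrix.mulVecLin_apply, Matrix.mulVec, dotProduct] at h5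
    simpa [mul_comm] using h5
  refine ⟨fun j => C (y j), ?_, ?_⟩
  · rintro x ⟨w, hw⟩
    unfold convPairing
    have hinner : ∀ j, ∑ i ∈ ((C (y j)) : F[X]).support, (C (y j)).coeff i * (x j).coeff i
        = y j * (x j).coeff 0 := by
      intro j
      rcases eq_or_ne (y j) 0 with h | h
      · simp [h]
      · rw [support_C h]
        simp
    rw [Finset.sum_congr rfl fun j _ => hinner j]
    have hx0 : ∀ j, (x j).coeff 0 = ∑ i : Fin κ, (w i).coeff 0 * α j ^ (i:ℕ) := by
      intro j
      have : x j = ∑ i, w i * Gm α t κ M i j := by rw [hw]; rfl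
      rw [this, finset_sum_coeff]
      apply Finset.sum_congr rfl
      intro i _
      rw [mul_coeff_zero]
      congr 1
      unfold Gm
      rcases eq_or_ne ((i:ℕ)) t with h | h
      · rw [if_pos h, coeff_add, coeff_C, mul_coeff_zero, coeff_X_zero, zero_mul]
        simp
      · rw [if_neg h, add_zero, coeff_C]
        simp
    calc ∑ j, y j * (x j).coeff 0
        = ∑ j, ∑ i : Fin κ, (w i).coeff 0 * (y j * α j ^ (i:ℕ)) := by
          apply Finset.sum_congr rfl
          intro j _
          rw [hx0 j, Finset.mul_sum]
          exact Finset.sum_congr rfl fun i _ => by ring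
      _ = ∑ i : Fin κ, (w i).coeff 0 * ∑ j, y j * α j ^ (i:ℕ) := by
          rw [Finset.sum_comm]
          exact Finset.sum_congr rfl fun i _ => by rw [Finset.mul_sum]
      _ = 0 := Finset.sum_eq_zero fun i _ => by rw [hymom i, mul_zero]
  · intro h
    apply hy0
    funext j
    have := congrFun h j
    simpa using this

lemma zero_not_mem_genDegrees (hα : Function.Injective α) (ht : t < κ)
    (hκM : κ ≤ M) (hMn : M < n) :
    0 ∉ genDegrees n (ConvCode (Gm α t κ M)) := by
  rintro ⟨k', G', ⟨hind, hcode⟩, hbasic, hext⟩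
  have hrow : ∀ i, rowDeg G' i = 0 := by
    intro i
    have := (Finset.sum_eq_zero_iff).mp hext
    exact this i (Finset.mem_univ i)
  have hconst : ∀ i j, (G' i j).natDegree = 0 := by
    intro i j
    have h1 : (G' i j).natDegree ≤ rowDeg G' i :=
      Finset.le_sup (f := fun j => (G' i j).natDegree) (Finset.mem_univ j)
    have h2 := hrow i
    omega
  set v : Fin n → F[X] := Gm α t κ M ⟨t, ht⟩ with hv
  have hvmem : v ∈ ConvCode (Gm α t κ M) := by
    refine ⟨fun i => if i = ⟨t, ht⟩ then 1 else 0, ?_⟩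
    funext j
    show v j = ∑ i, (if i = ⟨t, ht⟩ then (1:F[X]) else 0) * Gm α t κ M i j
    simp only [ite_mul, one_mul, zero_mul]
    rw [Finset.sum_ite_eq' Finset.univ]
    simp [hv]
  have hvmem' : v ∈ ConvCode G' := by rwa [hcode]
  have hwmem : (fun j => C ((v j).coeff 1)) ∈ ConvCode G' := const_coeff_mem hconst hvmem' 1
  rw [hcode] at hwmem
  have hvco : ∀ j, (v j).coeff 1 = α j ^ M := by
    intro j
    rw [hv]
    unfold Gm
    rw [if_pos rfl, coeff_add, coeff_C, mul_comm X, coeff_mul_X, coeff_C]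
    simp
  have : (fun j => C ((v j).coeff 1)) = fun j => C (α j ^ M) := by
    funext j; rw [hvco j]
  rw [this] at hwmem
  exact top_not_mem α hα ht hκM hMn hwmem

lemma reduced_Gm (hα : Function.Injective α) (ht : t < κ) (hκM : κ ≤ M) (hMn : M < n)
    (hex : ∃ j : Fin n, α j ≠ 0) :
    IsReducedBasic (Gm α t κ M) (ConvCode (Gm α t κ M)) := by
  refine ⟨⟨linIndep_Gm α hα ht hκM hMn, rfl⟩, basic_Gm α hα ht hκM hMn, ?_⟩
  intro d hd
  have hd0 : d ≠ 0 := by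
    rintro rfl
    exact zero_not_mem_genDegrees α hα ht hκM hMn hd
  rw [extDeg_Gm α ht hex]
  omega

lemma hasDeg_Gm (hα : Function.Injective α) (ht : t < κ) (hκM : κ ≤ M) (hMn : M < n)
    (hex : ∃ j : Fin n, α j ≠ 0) :
    HasCodeDegree (ConvCode (Gm α t κ M)) 1 := by
  constructor
  · exact ⟨κ, Gm α t κ M, ⟨linIndep_Gm α hα ht hκM hMn, rfl⟩,
      basic_Gm α hα ht hκM hMn, extDeg_Gm α ht hex⟩
  · intro d hd
    have hd0 : d ≠ 0 := by
      rintro rfl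
      exact zero_not_mem_genDegrees α hα ht hκM hMn hd
    omega

lemma row_mem (i0 : Fin κ) : Gm α t κ M i0 ∈ ConvCode (Gm α t κ M) := by
  refine ⟨fun i => if i = i0 then 1 else 0, ?_⟩
  funext j
  show Gm α t κ M i0 j = ∑ i, (if i = i0 then (1:F[X]) else 0) * Gm α t κ M i j
  simp only [ite_mul, one_mul, zero_mul]
  rw [Finset.sum_ite_eq' Finset.univ]
  simp

end Constr

end Aux

/-- classical content of Theorem 10. -/
theorem stmt18 {F : Type*} [Field F] [Fintype F]
    {q : ℕ} (hq : IsPrimePow q) (hq5 : 5 ≤ q) (hF : Fintype.card F = q)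
    (n k t : ℕ) (hk : 1 ≤ k) (hn5 : 5 ≤ n) (hnq : n ≤ q) (hkn : k ≤ n - 4)
    (ht1 : 1 ≤ t) (ht2 : t ≤ n - k - 1) :
    ∃ (V1 V2 : Set (Fin n → F[X])) (k1 k2 : ℕ)
      (G1 : Matrix (Fin k1) (Fin n) F[X]) (G2 : Matrix (Fin k2) (Fin n) F[X]),
      V2 ⊆ V1 ∧
      IsReducedBasic G1 V1 ∧ Finset.univ.sup (rowDeg G1) = 1 ∧
      IsReducedBasic G2 V2 ∧ Finset.univ.sup (rowDeg G2) = 1 ∧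
      (k1 : ℤ) - (k2 : ℤ) = (n : ℤ) - (t : ℤ) - (k : ℤ) - 1 ∧
      (∃ γ1 γ2 : ℕ, HasCodeDegree V1 γ1 ∧ HasCodeDegree V2 γ2 ∧ γ1 + γ2 = 2) ∧
      k + 1 ≤ freeDist V1 ∧
      t + 2 ≤ freeDist (ConvDual V2) := by
  classical
  have hkn4 : k + 4 ≤ n := by omega
  have hM : n - k < n := by omega
  have htκ1 : t < n - k := by omega
  have hκ2M : t + 1 ≤ n - k := by omega
  obtain ⟨emb⟩ : Nonempty (Fin n ↪ F) := by
    rw [Function.Embedding.nonempty_iff_card_le, Fintype.card_fin, hF]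
    exact hnq
  set α : Fin n → F := ⇑emb with hαdef
  have hα : Function.Injective α := emb.injective
  have hex : ∃ j : Fin n, α j ≠ 0 := by
    have h01 : (⟨0, by omega⟩ : Fin n) ≠ ⟨1, by omega⟩ := by
      simp [Fin.ext_iff]
    by_cases h : α ⟨0, by omega⟩ = 0
    · refine ⟨⟨1, by omega⟩, fun hh => h01 ?_⟩
      exact hα (h.trans hh.symm)
    · exact ⟨⟨0, by omega⟩, h⟩
  refine ⟨ConvCode (Gm α t (n-k) (n-k)), ConvCode (Gm α t (t+1) (n-k)),
    n - k, t + 1, Gm α t (n-k) (n-k), Gm α t (t+1) (n-k),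
    subset_Gm α (Nat.lt_succ_self t) hκ2M,
    reduced_Gm α hα htκ1 le_rfl hM hex,
    supRowDeg_Gm α htκ1 hex,
    reduced_Gm α hα (Nat.lt_succ_self t) hκ2M hM hex,
    supRowDeg_Gm α (Nat.lt_succ_self t) hex,
    by omega,
    ⟨1, 1, hasDeg_Gm α hα htκ1 le_rfl hM hex, hasDeg_Gm α hα (Nat.lt_succ_self t) hκ2M hM hex, rfl⟩,
    ?_, ?_⟩
  · -- free distance of V1
    apply le_csInf
    · refine ⟨polyWt (Gm α t (n-k) (n-k) ⟨0, by omega⟩), Gm α t (n-k) (n-k) ⟨0, by omega⟩,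
        row_mem α _, ?_, rfl⟩
      intro h
      have := congrFun h ⟨0, by omega⟩
      unfold Gm at this
      rw [if_neg (by simpa using (by omega : (0:ℕ) ≠ t))] at this
      simp at this
    · rintro b ⟨x, hx, hxne, hwt⟩
      have hb := wt_lower α hα htκ1 le_rfl hM x hx hxne
      omega
  · -- free distance of dual of V2
    apply le_csInf
    · obtain ⟨u, hu, hune⟩ := dual_nonempty α hα (Nat.lt_succ_self t) (by omega : t + 1 < n)
      exact ⟨polyWt u, u, hu, hune, rfl⟩
    · rintro b ⟨u, hu, hune, hwt⟩
      have hb := dual_dist α hα (Nat.lt_succ_self t) u hu hune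
      omega

end AQCC
end
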